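/- arXiv:1901.00453 — 4 statements merged into one kernel-verified Lean document; each statement's English description precedes it below -/
import Mathlib

section
/- Let N ≥ 3 be an integer, p > 2, γ ∈ [0, (N−2)/N], and let U ∈ C²([0,∞)) be a bounded solution of (P_γ) with U not identically zero. Then there exists a constant C > 0 such that |U'(t)| ≤ C e^{−2t/N} and |U''(t)| ≤ C e^{−2t/N} for all t ≥ 0; moreover the limit lim_{t→∞} U(t) exists and is nonzero. -/
open Real Filter Set MeasureTheory Asymptotics

noncomputable section

/-- `α_p = max{((N−2)p − 2N)/2, 0}`. -/
def alphaP (N : ℕ) (p : ℝ) : ℝ := max ((((N : ℝ) - 2) * p - 2 * (N : ℝ)) / 2) 0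

/-- `γ_p = (N−2)/(N+α_p)`. -/
def gammaP (N : ℕ) (p : ℝ) : ℝ := ((N : ℝ) - 2) / ((N : ℝ) + alphaP N p)

/-- `U` is bounded on `[0,∞)`. -/
def BddOn (U : ℝ → ℝ) : Prop := ∃ C : ℝ, ∀ t, 0 ≤ t → |U t| ≤ C

/-- `U` is a C² solution of problem (P_γ):
`−(e^{−γt}U')' = e^{−t}|U|^{p−2}U` on `[0,∞)`, `U(0) = 0`. -/
def SolP (p γ : ℝ) (U : ℝ → ℝ) : Prop :=
  ContDiff ℝ 2 U ∧ U 0 = 0 ∧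
  ∀ t : ℝ, 0 ≤ t →
    deriv (fun s => Real.exp (-γ * s) * deriv U s) t
      = -(Real.exp (-t) * |U t| ^ (p - 2) * U t)

/-- `U` has exactly `m` zeros in `(0,∞)`. -/
def ZeroCount (U : ℝ → ℝ) (m : ℕ) : Prop :=
  {t : ℝ | 0 < t ∧ U t = 0}.Finite ∧ {t : ℝ | 0 < t ∧ U t = 0}.ncard = m

/-- characterization of `U_γ`: bounded solution of (P_γ) with exactly `K−1`
zeros in `(0,∞)` and positive limit at `+∞`. -/
def IsUsol (p γ : ℝ) (K : ℕ) (U : ℝ → ℝ) : Prop :=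
  SolP p γ U ∧ BddOn U ∧ ZeroCount U (K - 1) ∧
    ∃ L : ℝ, 0 < L ∧ Filter.Tendsto U Filter.atTop (nhds L)

/-- `Ψ` is a bounded solution of the linearized eigenvalue problem (E_γ) with
eigenvalue `ν`: `−(e^{−γt}Ψ')' − (p−1)e^{−t}|U_γ|^{p−2}Ψ = ν e^{−γt}Ψ`, `Ψ(0)=0`. -/
def EigenEq (p γ : ℝ) (U : ℝ → ℝ) (ν : ℝ) (Ψ : ℝ → ℝ) : Prop :=
  ContDiff ℝ 2 Ψ ∧ Ψ 0 = 0 ∧ BddOn Ψ ∧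
  ∀ t : ℝ, 0 ≤ t →
    deriv (fun s => Real.exp (-γ * s) * deriv Ψ s) t
      = -((p - 1) * Real.exp (-t) * |U t| ^ (p - 2) * Ψ t + ν * Real.exp (-γ * t) * Ψ t)

/-- nontrivial on `[0,∞)`. -/
def Nontriv (Ψ : ℝ → ℝ) : Prop := ∃ t : ℝ, 0 ≤ t ∧ Ψ t ≠ 0

/-- `ν` is a negative eigenvalue of (E_γ). -/
def IsNegEigen (p γ : ℝ) (K : ℕ) (ν : ℝ) : Prop :=
  ν < 0 ∧ ∀ U : ℝ → ℝ, IsUsol p γ K U → ∃ Ψ, EigenEq p γ U ν Ψ ∧ Nontriv Ψ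

/-- `ν j γ` (for `1 ≤ j ≤ K`) enumerates the negative eigenvalues of (E_γ)
in strictly increasing order. -/
def Enumerates (p : ℝ) (K : ℕ) (γP : ℝ) (ν : ℕ → ℝ → ℝ) : Prop :=
  ∀ γ : ℝ, 0 ≤ γ → γ < γP →
    (∀ j j' : ℕ, 1 ≤ j → j < j' → j' ≤ K → ν j γ < ν j' γ) ∧
    (∀ j : ℕ, 1 ≤ j → j ≤ K → IsNegEigen p γ K (ν j γ)) ∧
    (∀ μ : ℝ, IsNegEigen p γ K μ → ∃ j : ℕ, 1 ≤ j ∧ j ≤ K ∧ μ = ν j γ)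

/-!
Write `W = e^{-γt} U'`, so that the equation reads `W' = -e^{-t} |U|^{p-2} U`. Since `U` is
bounded, `|W'| ≲ e^{-t}`, hence `W` has a limit; it must be `0`, for otherwise `U' = e^{γt} W`
would eventually keep a sign and stay away from `0`, and `U` would be unbounded. Integrating `W'`
and then `U'` from `t` to `∞` gives `|U'|, |U''| ≲ e^{-(1-γ)t}` with `1 - γ ≥ 2/N`, and the
existence of `lim U`. If that limit were `0`, the same two integrations would turn a bound
`|U| ≤ A e^{-at}` into `|U| ≤ M^{p-2} A e^{-(a+1-γ)t} / (a+1-γ)`; iterating from `|U| ≤ M`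
gives `|U| ≤ M (M^{p-2}/(1-γ))^n / n!` for every `n`, so `U ≡ 0`.
-/

open scoped Topology Nat

section ExpDecay

variable {f : ℝ → ℝ} {t c β : ℝ}

lemma integrableOn_Ioi_deriv_of_abs_le_exp (hβ : 0 < β)
    (hb : ∀ s, t ≤ s → |deriv f s| ≤ c * exp (-β * s)) :
    IntegrableOn (deriv f) (Ioi t) :=
  Integrable.mono' ((exp_neg_integrableOn_Ioi t hβ).const_mul c)
    (measurable_deriv f).aestronglyMeasurable
    ((ae_restrict_iff' measurableSet_Ioi).mpr (ae_of_all _ fun s hs => hb s hs.le))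

lemma abs_sub_le_of_abs_deriv_le_exp {l : ℝ} (hβ : 0 < β)
    (hf : ∀ s, t ≤ s → DifferentiableAt ℝ f s)
    (hb : ∀ s, t ≤ s → |deriv f s| ≤ c * exp (-β * s)) (hl : Tendsto f atTop (𝓝 l)) :
    |f t - l| ≤ c * exp (-β * t) / β := by
  rw [abs_sub_comm, ← integral_Ioi_of_hasDerivAt_of_tendsto' (fun s hs => (hf s hs).hasDerivAt)
    (integrableOn_Ioi_deriv_of_abs_le_exp hβ hb) hl]
  calc ‖∫ s in Ioi t, deriv f s‖ ≤ ∫ s in Ioi t, c * exp (-β * s) :=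
        norm_integral_le_of_norm_le ((exp_neg_integrableOn_Ioi t hβ).const_mul c)
          ((ae_restrict_iff' measurableSet_Ioi).mpr (ae_of_all _ fun s hs => hb s hs.le))
    _ = c * exp (-β * t) / β := by
        rw [integral_const_mul, integral_exp_mul_Ioi (neg_lt_zero.2 hβ)]
        field_simp

lemma tendsto_limUnder_of_abs_deriv_le_exp (hβ : 0 < β) (hf : Differentiable ℝ f)
    (hb : ∀ s, t ≤ s → |deriv f s| ≤ c * exp (-β * s)) :
    Tendsto f atTop (𝓝 (limUnder atTop f)) :=
  tendsto_limUnder_of_hasDerivAt_of_integrableOn_Ioi (fun s _ => (hf s).hasDerivAt)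
    (integrableOn_Ioi_deriv_of_abs_le_exp hβ hb)

end ExpDecay

lemma tendsto_atTop_of_eventually_le_deriv {f : ℝ → ℝ} {c : ℝ} (hc : 0 < c)
    (hf : Differentiable ℝ f) (h : ∀ᶠ t in atTop, c ≤ deriv f t) :
    Tendsto f atTop atTop := by
  obtain ⟨T, hT⟩ := eventually_atTop.1 h
  have hgrowth : ∀ t, T ≤ t → f T + c * (t - T) ≤ f t := by
    intro t ht
    have := (convex_Ici T).mul_sub_le_image_sub_of_le_deriv hf.continuous.continuousOn
      hf.differentiableOn (fun x hx => hT x (interior_Ici.subset hx).le) T self_mem_Ici t ht ht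
    linarith
  refine tendsto_atTop_mono' atTop (eventually_atTop.2 ⟨T, hgrowth⟩) ?_
  exact tendsto_atTop_add_const_left _ _
    ((tendsto_atTop_add_const_right _ (-T) tendsto_id).const_mul_atTop hc)

lemma BddOn.not_tendsto_atTop {f : ℝ → ℝ} (hf : BddOn f) : ¬ Tendsto f atTop atTop := by
  intro h
  obtain ⟨M, hM⟩ := hf
  obtain ⟨t, ht⟩ := (h.eventually_gt_atTop M).and (eventually_ge_atTop 0) |>.exists
  exact (hM t ht.2).not_gt (ht.1.trans_le (le_abs_self _))

lemma eq_zero_of_abs_le_exp_bootstrap {f : ℝ → ℝ} {M K δ : ℝ} (hδ : 0 < δ) (hK : 0 ≤ K)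
    (hM : ∀ t, 0 ≤ t → |f t| ≤ M)
    (hstep : ∀ A a, 0 ≤ a → (∀ t, 0 ≤ t → |f t| ≤ A * exp (-a * t)) →
      ∀ t, 0 ≤ t → |f t| ≤ K * A / (a + δ) * exp (-(a + δ) * t)) :
    ∀ t, 0 ≤ t → f t = 0 := by
  have hM0 : 0 ≤ M := (abs_nonneg _).trans (hM 0 le_rfl)
  have hbound : ∀ n : ℕ, ∀ t, 0 ≤ t →
      |f t| ≤ M * (K / δ) ^ n / n ! * exp (-(n * δ) * t) := by
    intro n
    induction n with
    | zero => simpa using hM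
    | succ n ih =>
      intro t ht
      convert hstep _ _ (by positivity) ih t ht using 2
      · rw [Nat.factorial_succ, div_pow, div_pow, pow_succ, pow_succ]
        push_cast
        field_simp
      · push_cast; ring_nf
  have hlim : Tendsto (fun n : ℕ => M * (K / δ) ^ n / n !) atTop (𝓝 0) := by
    simpa [mul_div_assoc] using (FloorSemiring.tendsto_pow_div_factorial_atTop (K / δ)).const_mul M
  intro t ht
  refine abs_eq_zero.1 (le_antisymm (ge_of_tendsto hlim (Eventually.of_forall fun n => ?_))
    (abs_nonneg _))
  calc |f t| ≤ M * (K / δ) ^ n / n ! * exp (-(n * δ) * t) := hbound n t ht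
    _ ≤ M * (K / δ) ^ n / n ! :=
        mul_le_of_le_one_right (by positivity)
          (exp_le_one_iff.2 (by nlinarith [mul_nonneg (Nat.cast_nonneg n) hδ.le]))

def weightedDeriv (γ : ℝ) (U : ℝ → ℝ) (t : ℝ) : ℝ := exp (-γ * t) * deriv U t

lemma deriv_eq_exp_mul_weightedDeriv (γ : ℝ) (U : ℝ → ℝ) (t : ℝ) :
    deriv U t = exp (γ * t) * weightedDeriv γ U t := by
  rw [weightedDeriv, ← mul_assoc, ← exp_add]
  simp

namespace SolP

variable {p γ M : ℝ} {U : ℝ → ℝ}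

lemma differentiable (hU : SolP p γ U) : Differentiable ℝ U :=
  hU.1.differentiable (by norm_num)

lemma differentiable_deriv (hU : SolP p γ U) : Differentiable ℝ (deriv U) :=
  (hU.1.deriv' (n := 1)).differentiable one_ne_zero

lemma differentiable_weightedDeriv (hU : SolP p γ U) :
    Differentiable ℝ (weightedDeriv γ U) := by
  have := hU.differentiable_deriv
  unfold weightedDeriv
  fun_prop

lemma deriv_deriv_eq (hU : SolP p γ U) (t : ℝ) :
    deriv (deriv U) t = γ * deriv U t + exp (γ * t) * deriv (weightedDeriv γ U) t := by
  have hfun : deriv U = fun s => exp (γ * s) * weightedDeriv γ U s :=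
    funext (deriv_eq_exp_mul_weightedDeriv γ U)
  have hexp : HasDerivAt (fun s => exp (γ * s)) (exp (γ * t) * γ) t := by
    simpa using ((hasDerivAt_id t).const_mul γ).exp
  have hprod : HasDerivAt (fun s => exp (γ * s) * weightedDeriv γ U s)
      (exp (γ * t) * γ * weightedDeriv γ U t + exp (γ * t) * deriv (weightedDeriv γ U) t) t :=
    hexp.mul (hU.differentiable_weightedDeriv t).hasDerivAt
  simp only [hfun, hprod.deriv]
  ring

lemma abs_deriv_weightedDeriv_le (hU : SolP p γ U) (hp : 2 ≤ p)
    (hM : ∀ t, 0 ≤ t → |U t| ≤ M) {A a : ℝ}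
    (hA : ∀ t, 0 ≤ t → |U t| ≤ A * exp (-a * t)) {t : ℝ} (ht : 0 ≤ t) :
    |deriv (weightedDeriv γ U) t| ≤ M ^ (p - 2) * A * exp (-(1 + a) * t) := by
  have hM0 : 0 ≤ M := (abs_nonneg _).trans (hM 0 le_rfl)
  have hpow : |U t| ^ (p - 2) ≤ M ^ (p - 2) :=
    rpow_le_rpow (abs_nonneg _) (hM t ht) (by linarith)
  calc |deriv (weightedDeriv γ U) t| = exp (-t) * (|U t| ^ (p - 2) * |U t|) := by
        rw [show weightedDeriv γ U = fun s => exp (-γ * s) * deriv U s from rfl, hU.2.2 t ht,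
          abs_neg, abs_mul, abs_mul, abs_exp, abs_of_nonneg (rpow_nonneg (abs_nonneg _) _),
          mul_assoc]
    _ ≤ exp (-t) * (M ^ (p - 2) * (A * exp (-a * t))) := by
        have := rpow_nonneg hM0 (p - 2)
        gcongr
        exact hA t ht
    _ = M ^ (p - 2) * A * exp (-(1 + a) * t) := by
        rw [show -(1 + a) * t = -t + -a * t by ring, exp_add]
        ring

lemma tendsto_weightedDeriv (hU : SolP p γ U) (hp : 2 ≤ p) (hγ : 0 ≤ γ)
    (hM : ∀ t, 0 ≤ t → |U t| ≤ M) : Tendsto (weightedDeriv γ U) atTop (𝓝 0) := by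
  set v := limUnder atTop (weightedDeriv γ U)
  have hv : Tendsto (weightedDeriv γ U) atTop (𝓝 v) :=
    tendsto_limUnder_of_abs_deriv_le_exp (t := 0) one_pos hU.differentiable_weightedDeriv
      fun s hs => by simpa using hU.abs_deriv_weightedDeriv_le hp hM (a := 0) (by simpa) hs
  convert hv
  by_contra hv0
  -- Dividing by `v` treats both signs of `v` at once.
  have hlarge : ∀ᶠ t in atTop, 1 / 2 ≤ deriv (fun s => U s / v) t := by
    have hhalf : (1 : ℝ) / 2 < v / v := by norm_num [div_self (Ne.symm hv0)]
    filter_upwards [(hv.div_const v).eventually (lt_mem_nhds hhalf), eventually_ge_atTop 0]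
      with t ht ht0
    rw [deriv_div_const, deriv_eq_exp_mul_weightedDeriv γ, mul_div_assoc]
    exact ht.le.trans (le_mul_of_one_le_left (by linarith) (one_le_exp (by positivity)))
  refine BddOn.not_tendsto_atTop ⟨M / |v|, fun t ht => ?_⟩
    (tendsto_atTop_of_eventually_le_deriv one_half_pos (hU.differentiable.div_const v) hlarge)
  rw [abs_div]
  exact div_le_div_of_nonneg_right (hM t ht) (abs_nonneg v)

section Decay

variable (hU : SolP p γ U) (hp : 2 ≤ p) (hγ : 0 ≤ γ) (hM : ∀ t, 0 ≤ t → |U t| ≤ M)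
  {A a : ℝ} (hA : ∀ t, 0 ≤ t → |U t| ≤ A * exp (-a * t)) (ha : 0 ≤ a)
include hU hp hγ hM hA ha

lemma abs_weightedDeriv_le {t : ℝ} (ht : 0 ≤ t) :
    |weightedDeriv γ U t| ≤ M ^ (p - 2) * A * exp (-(1 + a) * t) := by
  have hA0 : 0 ≤ A := by simpa using (abs_nonneg _).trans (hA 0 le_rfl)
  have hM0 : 0 ≤ M := (abs_nonneg _).trans (hM 0 le_rfl)
  have htail := abs_sub_le_of_abs_deriv_le_exp (by linarith)
    (fun s _ => hU.differentiable_weightedDeriv s)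
    (fun s hs => hU.abs_deriv_weightedDeriv_le hp hM hA (ht.trans hs))
    (hU.tendsto_weightedDeriv hp hγ hM)
  rw [sub_zero] at htail
  exact htail.trans (div_le_self (by positivity) (by linarith))

lemma abs_deriv_le {t : ℝ} (ht : 0 ≤ t) :
    |deriv U t| ≤ M ^ (p - 2) * A * exp (-(1 + a - γ) * t) := by
  calc |deriv U t| = exp (γ * t) * |weightedDeriv γ U t| := by
        rw [deriv_eq_exp_mul_weightedDeriv γ, abs_mul, abs_exp]
    _ ≤ exp (γ * t) * (M ^ (p - 2) * A * exp (-(1 + a) * t)) := by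
        gcongr
        exact hU.abs_weightedDeriv_le hp hγ hM hA ha ht
    _ = M ^ (p - 2) * A * exp (-(1 + a - γ) * t) := by
        rw [show -(1 + a - γ) * t = γ * t + -(1 + a) * t by ring, exp_add]
        ring

lemma abs_deriv_deriv_le {t : ℝ} (ht : 0 ≤ t) :
    |deriv (deriv U) t| ≤ (1 + γ) * (M ^ (p - 2) * A) * exp (-(1 + a - γ) * t) := by
  calc |deriv (deriv U) t|
      ≤ γ * |deriv U t| + exp (γ * t) * |deriv (weightedDeriv γ U) t| := by
        rw [hU.deriv_deriv_eq]
        refine (abs_add_le _ _).trans_eq ?_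
        rw [abs_mul, abs_mul, abs_of_nonneg hγ, abs_exp]
    _ ≤ γ * (M ^ (p - 2) * A * exp (-(1 + a - γ) * t))
        + exp (γ * t) * (M ^ (p - 2) * A * exp (-(1 + a) * t)) := by
        gcongr
        · exact hU.abs_deriv_le hp hγ hM hA ha ht
        · exact hU.abs_deriv_weightedDeriv_le hp hM hA ht
    _ = (1 + γ) * (M ^ (p - 2) * A) * exp (-(1 + a - γ) * t) := by
        rw [show -(1 + a - γ) * t = γ * t + -(1 + a) * t by ring, exp_add]
        ring

end Decay

lemma eq_zero_of_tendsto_zero (hU : SolP p γ U) (hp : 2 ≤ p) (hγ : 0 ≤ γ) (hγ1 : γ < 1)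
    (hM : ∀ t, 0 ≤ t → |U t| ≤ M) (hL : Tendsto U atTop (𝓝 0)) :
    ∀ t, 0 ≤ t → U t = 0 := by
  have hM0 : 0 ≤ M := (abs_nonneg _).trans (hM 0 le_rfl)
  refine eq_zero_of_abs_le_exp_bootstrap (sub_pos.2 hγ1) (rpow_nonneg hM0 (p - 2)) hM
    fun A a ha hA t ht => ?_
  have hU' : ∀ s, t ≤ s → |deriv U s| ≤ M ^ (p - 2) * A * exp (-(a + (1 - γ)) * s) := by
    intro s hs
    rw [show -(a + (1 - γ)) * s = -(1 + a - γ) * s by ring]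
    exact hU.abs_deriv_le hp hγ hM hA ha (ht.trans hs)
  simpa [mul_div_right_comm] using
    abs_sub_le_of_abs_deriv_le_exp (by linarith) (fun s _ => hU.differentiable s) hU' hL

end SolP

lemma two_div_le_one_sub_of_le_sub_two_div {N : ℕ} {γ : ℝ} (h : γ ≤ ((N : ℝ) - 2) / N) :
    2 / (N : ℝ) ≤ 1 - γ ∧ 0 < 1 - γ := by
  rcases N.eq_zero_or_pos with rfl | hN
  · simp only [CharP.cast_eq_zero, div_zero] at h ⊢
    constructor <;> linarith
  · have hN' : (0 : ℝ) < N := by exact_mod_cast hN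
    rw [sub_div, div_self hN'.ne'] at h
    constructor <;> linarith [div_pos two_pos hN']

theorem stmt1_general (N : ℕ) (p γ : ℝ) (hp : 2 < p)
    (hγ0 : 0 ≤ γ) (hγ1 : γ ≤ ((N : ℝ) - 2) / (N : ℝ))
    (U : ℝ → ℝ) (hU : SolP p γ U) (hbdd : BddOn U)
    (hne : ∃ t : ℝ, 0 ≤ t ∧ U t ≠ 0) :
    (∃ C : ℝ, 0 < C ∧ ∀ t : ℝ, 0 ≤ t →
        |deriv U t| ≤ C * Real.exp (-(2 / (N : ℝ)) * t) ∧
        |deriv (deriv U) t| ≤ C * Real.exp (-(2 / (N : ℝ)) * t)) ∧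
    ∃ L : ℝ, L ≠ 0 ∧ Filter.Tendsto U Filter.atTop (nhds L) := by
  obtain ⟨M, hM⟩ := hbdd
  obtain ⟨hγN, hδ⟩ := two_div_le_one_sub_of_le_sub_two_div hγ1
  have hM0 : 0 ≤ M := (abs_nonneg _).trans (hM 0 le_rfl)
  have hMexp : ∀ t, 0 ≤ t → |U t| ≤ M * exp (-0 * t) := by simpa using hM
  have hU' := fun t => hU.abs_deriv_le hp.le hγ0 hM hMexp le_rfl (t := t)
  have hU'' := fun t => hU.abs_deriv_deriv_le hp.le hγ0 hM hMexp le_rfl (t := t)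
  have hB : 0 ≤ M ^ (p - 2) * M := mul_nonneg (rpow_nonneg hM0 _) hM0
  refine ⟨⟨2 * (M ^ (p - 2) * M) + 1, by positivity, fun t ht => ⟨?_, ?_⟩⟩, ?_⟩
  · refine (hU' t ht).trans ?_
    gcongr <;> linarith
  · refine (hU'' t ht).trans ?_
    gcongr
    · nlinarith
    · linarith
  · obtain ⟨t₀, ht₀, hUt₀⟩ := hne
    have hL := tendsto_limUnder_of_abs_deriv_le_exp (by linarith) hU.differentiable hU'
    exact ⟨_, fun hL0 => hUt₀ (hU.eq_zero_of_tendsto_zero hp.le hγ0 (by linarith) hM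
      (hL0 ▸ hL) t₀ ht₀), hL⟩

/-- decay of derivatives and existence of a nonzero limit for
bounded nontrivial solutions of (P_γ), `0 ≤ γ ≤ (N−2)/N`. -/
theorem stmt1 (N : ℕ) (hN : 3 ≤ N) (p γ : ℝ) (hp : 2 < p)
    (hγ0 : 0 ≤ γ) (hγ1 : γ ≤ ((N : ℝ) - 2) / (N : ℝ))
    (U : ℝ → ℝ) (hU : SolP p γ U) (hbdd : BddOn U)
    (hne : ∃ t : ℝ, 0 ≤ t ∧ U t ≠ 0) :
    (∃ C : ℝ, 0 < C ∧ ∀ t : ℝ, 0 ≤ t →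
        |deriv U t| ≤ C * Real.exp (-(2 / (N : ℝ)) * t) ∧
        |deriv (deriv U) t| ≤ C * Real.exp (-(2 / (N : ℝ)) * t)) ∧
    ∃ L : ℝ, L ≠ 0 ∧ Filter.Tendsto U Filter.atTop (nhds L) :=
  stmt1_general N p γ hp hγ0 hγ1 U hU hbdd hne
end
end

section
/- Let N ≥ 3 be an integer, p > 2, K ≥ 1 an integer, and γ ∈ (0, γ_p). If U and Ũ are two bounded C² solutions of (P_γ), each having exactly K−1 zeros in (0,∞) and each satisfying lim_{t→∞} U(t) > 0 (respectively lim_{t→∞} Ũ(t) > 0), then U = Ũ. -/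
/-
Two facts drive the proof. First, (P_γ) is invariant under U ↦ a U(· + τ) whenever
a^(p-2) = e^((γ-1)τ). Second, two bounded solutions with the same limit at +∞ coincide: their
difference D satisfies |(e^(-γt) D')'| ≤ M e^(-t) |D|, so integrating twice from +∞ turns a bound
A e^(-at) on |D| into one with rate a + 1 - γ and constant M A / ((1 + a)(1 + a - γ)); once a is
large this contracts, forcing D = 0.
If lim V < lim U, the rescaling of U with a = lim V / lim U therefore equals V. Then V(0) = 0
makes τ > 0 a zero of U, and U has one more zero than V, contradicting that both have K - 1.
Hence the limits agree and U = V.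
-/

open Real Filter Set MeasureTheory Asymptotics

noncomputable section

open Topology

theorem gammaP_lt_one (N : ℕ) (p : ℝ) : gammaP N p < 1 := by
  have hα : 0 ≤ alphaP N p := le_max_right _ _
  rcases (add_nonneg (Nat.cast_nonneg N) hα).eq_or_lt with h | h
  · rw [gammaP, ← h, div_zero]
    exact one_pos
  · rw [gammaP, div_lt_one h]
    linarith

theorem hasDerivAt_abs_rpow_mul_self {q : ℝ} (hq : 0 < q) (x : ℝ) :
    HasDerivAt (fun u : ℝ => |u| ^ q * u) ((q + 1) * |x| ^ q) x := by
  rcases eq_or_ne x 0 with rfl | hx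
  · rw [hasDerivAt_iff_isLittleO]
    have hsmall : (fun u : ℝ => |u| ^ q) =o[𝓝 0] (fun _ => (1 : ℝ)) := by
      rw [isLittleO_one_iff]
      simpa [hq.ne'] using
        ((continuous_abs.rpow_const fun _ => Or.inr hq.le).tendsto (0 : ℝ))
    simpa [hq.ne'] using hsmall.mul_isBigO (isBigO_refl (fun u : ℝ => u) _)
  · have hsx : (SignType.sign x : ℝ) * x = |x| := by
      rcases hx.lt_or_gt with h | h <;> simp [h, abs_of_neg, abs_of_pos]
    have hpow : |x| ^ (q - 1) * |x| = |x| ^ q := by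
      rw [← rpow_add_one (abs_ne_zero.2 hx)]; ring_nf
    refine (((hasDerivAt_abs hx).rpow_const (Or.inl (abs_ne_zero.2 hx))).fun_mul
      (hasDerivAt_id' x)).congr_deriv ?_
    linear_combination (q * |x| ^ (q - 1)) * hsx + q * hpow

theorem abs_abs_rpow_mul_self_sub_le {q C a b : ℝ} (hq : 0 < q) (ha : |a| ≤ C) (hb : |b| ≤ C) :
    |(|a| ^ q * a) - |b| ^ q * b| ≤ (q + 1) * C ^ q * |a - b| := by
  have hderiv : ∀ x ∈ Icc (-C) C, HasDerivWithinAt (fun u : ℝ => |u| ^ q * u)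
      ((q + 1) * |x| ^ q) (Icc (-C) C) x :=
    fun x _ => (hasDerivAt_abs_rpow_mul_self hq x).hasDerivWithinAt
  have hbound : ∀ x ∈ Icc (-C) C, ‖(q + 1) * |x| ^ q‖ ≤ (q + 1) * C ^ q := by
    intro x hx
    rw [Real.norm_eq_abs, abs_of_nonneg (by positivity)]
    gcongr
    exact abs_le.2 hx
  exact (convex_Icc (-C) C).norm_image_sub_le_of_norm_hasDerivWithin_le hderiv hbound
    (abs_le.1 hb) (abs_le.1 ha)

theorem nonneg_of_deriv_nonpos_of_tendsto_zero {H : ℝ → ℝ} (hH : Differentiable ℝ H) {t : ℝ}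
    (hH' : ∀ s, t ≤ s → deriv H s ≤ 0) (hlim : Tendsto H atTop (𝓝 0)) : 0 ≤ H t := by
  have hanti : AntitoneOn H (Ici t) :=
    antitoneOn_of_deriv_nonpos (convex_Ici t) hH.continuous.continuousOn hH.differentiableOn
      fun s hs => hH' s (interior_subset hs)
  exact le_of_tendsto hlim <| (eventually_ge_atTop t).mono fun s hs => hanti self_mem_Ici hs hs

theorem abs_le_of_abs_deriv_le_neg_deriv {F G : ℝ → ℝ} (hF : Differentiable ℝ F)
    (hG : Differentiable ℝ G) {t : ℝ} (hFG : ∀ s, t ≤ s → |deriv F s| ≤ -deriv G s)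
    (hF0 : Tendsto F atTop (𝓝 0)) (hG0 : Tendsto G atTop (𝓝 0)) : |F t| ≤ G t := by
  have hplus : 0 ≤ G t + F t := by
    refine nonneg_of_deriv_nonpos_of_tendsto_zero (H := fun s => G s + F s) (hG.add hF)
      (fun s hs => ?_) (by simpa using hG0.add hF0)
    rw [deriv_fun_add (hG s) (hF s)]
    linarith [le_abs_self (deriv F s), hFG s hs]
  have hminus : 0 ≤ G t - F t := by
    refine nonneg_of_deriv_nonpos_of_tendsto_zero (H := fun s => G s - F s) (hG.sub hF)
      (fun s hs => ?_) (by simpa using hG0.sub hF0)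
    rw [deriv_fun_sub (hG s) (hF s)]
    linarith [neg_abs_le (deriv F s), hFG s hs]
  exact abs_le.2 ⟨by linarith, by linarith⟩

theorem tendsto_atTop_of_le_deriv {f : ℝ → ℝ} (hf : Differentiable ℝ f) {m : ℝ} (hm : 0 < m)
    (h : ∀ᶠ s in atTop, m ≤ deriv f s) : Tendsto f atTop atTop := by
  obtain ⟨T, hT⟩ := eventually_atTop.1 h
  have hgrowth : ∀ s, T ≤ s → m * (s - T) ≤ f s - f T := fun s hs =>
    (convex_Ici T).mul_sub_le_image_sub_of_le_deriv hf.continuous.continuousOn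
      hf.differentiableOn (fun x hx => hT x (interior_subset hx)) T self_mem_Ici s hs hs
  refine tendsto_atTop_mono' atTop ((eventually_ge_atTop T).mono fun s hs => ?_)
    (tendsto_atTop_add_const_right _ (f T - m * T) (tendsto_id.const_mul_atTop hm))
  rw [id_eq]
  linarith [hgrowth s hs]

theorem limit_nonpos_of_deriv_eq_exp_mul {D P : ℝ → ℝ} {γ L ℓ : ℝ} (hD : Differentiable ℝ D)
    (hγ : 0 ≤ γ) (hDP : ∀ t, deriv D t = exp (γ * t) * P t)
    (hDL : Tendsto D atTop (𝓝 L)) (hPℓ : Tendsto P atTop (𝓝 ℓ)) : ℓ ≤ 0 := by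
  by_contra! hℓ
  refine not_tendsto_nhds_of_tendsto_atTop
    (tendsto_atTop_of_le_deriv hD (half_pos hℓ) ?_) L hDL
  filter_upwards [hPℓ.eventually_const_le (half_lt_self hℓ), eventually_ge_atTop 0]
    with s hPs hs
  rw [hDP s]
  nlinarith [one_le_exp (mul_nonneg hγ hs)]

theorem limit_eq_zero_of_deriv_eq_exp_mul {D P : ℝ → ℝ} {γ L ℓ : ℝ} (hD : Differentiable ℝ D)
    (hγ : 0 ≤ γ) (hDP : ∀ t, deriv D t = exp (γ * t) * P t)
    (hDL : Tendsto D atTop (𝓝 L)) (hPℓ : Tendsto P atTop (𝓝 ℓ)) : ℓ = 0 := by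
  have hneg : -ℓ ≤ 0 := limit_nonpos_of_deriv_eq_exp_mul hD.neg hγ
    (fun t => by rw [deriv.neg, hDP t, mul_neg]) hDL.neg hPℓ.neg
  linarith [limit_nonpos_of_deriv_eq_exp_mul hD hγ hDP hDL hPℓ]

def ExpBound (f : ℝ → ℝ) (A a : ℝ) : Prop := ∀ t, 0 ≤ t → |f t| ≤ A * exp (-a * t)

namespace ExpBound

variable {f : ℝ → ℝ} {A a : ℝ}

theorem nonneg (h : ExpBound f A a) : 0 ≤ A := by
  simpa using (abs_nonneg _).trans (h 0 le_rfl)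

theorem mono_rate {b : ℝ} (h : ExpBound f A b) (hab : a ≤ b) : ExpBound f A a := fun t ht =>
  (h t ht).trans (mul_le_mul_of_nonneg_left (exp_le_exp.2 (by nlinarith)) h.nonneg)

theorem of_deriv (hb : 0 < a) (hf : Differentiable ℝ f) (hf0 : Tendsto f atTop (𝓝 0))
    (h : ExpBound (deriv f) A a) : ExpBound f (A / a) a := by
  intro t ht
  have hG : ∀ s, HasDerivAt (fun s => A / a * exp (-a * s)) (-(A * exp (-a * s))) s := fun s =>
    (((hasDerivAt_id' s).const_mul (-a)).exp.const_mul (A / a)).congr_deriv (by field_simp)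
  refine abs_le_of_abs_deriv_le_neg_deriv hf (fun s => (hG s).differentiableAt)
    (fun s hs => ?_) hf0 ?_
  · rw [(hG s).deriv, neg_neg]
    exact h s (ht.trans hs)
  · simpa using (tendsto_exp_atBot.comp
      (tendsto_id.const_mul_atTop_of_neg (neg_neg_of_pos hb))).const_mul (A / a)

theorem exists_tendsto_of_deriv (ha : 0 < a) (hf : Differentiable ℝ f)
    (h : ExpBound (deriv f) A a) : ∃ ℓ, Tendsto f atTop (𝓝 ℓ) := by
  have hint : IntegrableOn (deriv f) (Ioi 0) :=
    Integrable.mono' ((exp_neg_integrableOn_Ioi 0 ha).const_mul A)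
      (measurable_deriv f).aestronglyMeasurable
      ((ae_restrict_mem measurableSet_Ioi).mono fun s hs => h s (le_of_lt hs))
  exact ⟨_, tendsto_limUnder_of_hasDerivAt_of_integrableOn_Ioi
    (fun s _ => (hf s).hasDerivAt) hint⟩

end ExpBound

section LinearDecay

variable {D : ℝ → ℝ} {γ M : ℝ}

theorem ExpBound.step (hD : Differentiable ℝ D)
    (hP : Differentiable ℝ (fun t => exp (-γ * t) * deriv D t)) (hD0 : Tendsto D atTop (𝓝 0))
    (hP0 : Tendsto (fun t => exp (-γ * t) * deriv D t) atTop (𝓝 0)) (hγ : γ < 1) (hM : 0 ≤ M)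
    (hP' : ∀ t, 0 ≤ t → |deriv (fun s => exp (-γ * s) * deriv D s) t| ≤ M * exp (-t) * |D t|)
    {A a : ℝ} (ha : 0 ≤ a) (h : ExpBound D A a) :
    ExpBound D (M * A / (1 + a) / (1 + a - γ)) (1 + a - γ) := by
  have hP'A : ExpBound (deriv fun s => exp (-γ * s) * deriv D s) (M * A) (1 + a) := by
    intro t ht
    calc _ ≤ M * exp (-t) * |D t| := hP' t ht
      _ ≤ M * exp (-t) * (A * exp (-a * t)) := by gcongr; exact h t ht
      _ = M * A * exp (-(1 + a) * t) := by rw [mul_mul_mul_comm, ← exp_add]; ring_nf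
  have hPA := hP'A.of_deriv (by linarith) hP hP0
  refine ExpBound.of_deriv (by linarith) hD hD0 fun t ht => ?_
  calc |deriv D t| = exp (γ * t) * |exp (-γ * t) * deriv D t| := by
        rw [abs_mul, abs_of_pos (exp_pos _), ← mul_assoc, ← exp_add,
          show γ * t + -γ * t = 0 by ring, exp_zero, one_mul]
    _ ≤ exp (γ * t) * (M * A / (1 + a) * exp (-(1 + a) * t)) := by gcongr; exact hPA t ht
    _ = M * A / (1 + a) * exp (-(1 + a - γ) * t) := by
        rw [mul_left_comm, ← exp_add]; ring_nf

theorem exists_expBound_nat_mul (hD : Differentiable ℝ D)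
    (hP : Differentiable ℝ (fun t => exp (-γ * t) * deriv D t)) (hD0 : Tendsto D atTop (𝓝 0))
    (hP0 : Tendsto (fun t => exp (-γ * t) * deriv D t) atTop (𝓝 0)) (hγ : γ < 1) (hM : 0 ≤ M)
    (hP' : ∀ t, 0 ≤ t → |deriv (fun s => exp (-γ * s) * deriv D s) t| ≤ M * exp (-t) * |D t|)
    {B : ℝ} (hB : ExpBound D B 0) (n : ℕ) : ∃ A, ExpBound D A (n * (1 - γ)) := by
  induction n with
  | zero => exact ⟨B, by simpa using hB⟩
  | succ n ih =>
    obtain ⟨A, hA⟩ := ih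
    have hn : 0 ≤ (n : ℝ) * (1 - γ) := mul_nonneg n.cast_nonneg (by linarith)
    refine ⟨_, (hA.step hD hP hD0 hP0 hγ hM hP' hn).mono_rate (le_of_eq ?_)⟩
    push_cast; ring

theorem eqOn_zero_of_abs_deriv_exp_mul_deriv_le (hD : Differentiable ℝ D)
    (hP : Differentiable ℝ (fun t => exp (-γ * t) * deriv D t)) (hD0 : Tendsto D atTop (𝓝 0))
    (hγ0 : 0 ≤ γ) (hγ1 : γ < 1) (hM : 0 ≤ M) {B : ℝ} (hB : ExpBound D B 0)
    (hP' : ∀ t, 0 ≤ t → |deriv (fun s => exp (-γ * s) * deriv D s) t| ≤ M * exp (-t) * |D t|) :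
    EqOn D 0 (Ici 0) := by
  set P := fun t => exp (-γ * t) * deriv D t with hPdef
  have hDP : ∀ t, deriv D t = exp (γ * t) * P t := fun t => by
    rw [hPdef, ← mul_assoc, ← exp_add, show γ * t + -γ * t = 0 by ring, exp_zero, one_mul]
  have hP0 : Tendsto P atTop (𝓝 0) := by
    have hP'B : ExpBound (deriv P) (M * B) 1 := fun t ht => by
      calc _ ≤ M * exp (-t) * |D t| := hP' t ht
        _ ≤ M * exp (-t) * B := by gcongr; simpa using hB t ht
        _ = M * B * exp (-1 * t) := by ring_nf
    obtain ⟨ℓ, hℓ⟩ := hP'B.exists_tendsto_of_deriv one_pos hP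
    rwa [← limit_eq_zero_of_deriv_eq_exp_mul hD hγ0 hDP hD0 hℓ]
  -- once the rate `a` exceeds `M`, one more step shrinks the constant by `q < 1` at rate `a`
  obtain ⟨n, hn⟩ := exists_nat_gt (M / (1 - γ))
  set a := (n : ℝ) * (1 - γ)
  have ha : 0 ≤ a := mul_nonneg n.cast_nonneg (by linarith)
  set q := M / (1 + a) / (1 + a - γ) with hqdef
  have haM : M < a := (div_lt_iff₀ (by linarith)).1 hn
  have hγa : 0 < 1 + a - γ := by linarith
  have hq0 : 0 ≤ q := by positivity
  have hq1 : q < 1 := by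
    rw [hqdef, div_div, div_lt_one (by positivity)]
    nlinarith
  obtain ⟨A, hA⟩ := exists_expBound_nat_mul hD hP hD0 hP0 hγ1 hM hP' hB n
  have hcontract : ∀ k : ℕ, ExpBound D (q ^ k * A) a := by
    intro k
    induction k with
    | zero => simpa using hA
    | succ k ih =>
      have := (ih.step hD hP hD0 hP0 hγ1 hM hP' ha).mono_rate (a := a) (by linarith)
      convert this using 1
      ring
  intro t ht
  have hlim : Tendsto (fun k : ℕ => q ^ k * A * exp (-a * t)) atTop (𝓝 0) := by
    simpa using ((tendsto_pow_atTop_nhds_zero_of_lt_one hq0 hq1).mul_const A).mul_const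
      (exp (-a * t))
  exact abs_nonpos_iff.1 (ge_of_tendsto' hlim fun k => hcontract k t ht)

end LinearDecay

def SolvesODE (p γ : ℝ) (U : ℝ → ℝ) : Prop :=
  ∀ t : ℝ, 0 ≤ t →
    deriv (fun s => exp (-γ * s) * deriv U s) t = -(exp (-t) * |U t| ^ (p - 2) * U t)

namespace SolvesODE

variable {p γ : ℝ}

theorem eqOn_of_tendsto {L : ℝ} {W Z : ℝ → ℝ} (hp : 2 < p) (hγ0 : 0 ≤ γ) (hγ1 : γ < 1)
    (hW : ContDiff ℝ 2 W) (hZ : ContDiff ℝ 2 Z) (hWsol : SolvesODE p γ W)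
    (hZsol : SolvesODE p γ Z) (hWb : BddOn W) (hZb : BddOn Z)
    (hWL : Tendsto W atTop (𝓝 L)) (hZL : Tendsto Z atTop (𝓝 L)) : EqOn W Z (Ici 0) := by
  obtain ⟨CW, hCW⟩ := hWb
  obtain ⟨CZ, hCZ⟩ := hZb
  set C := max CW CZ
  have hWC : ∀ t, 0 ≤ t → |W t| ≤ C := fun t ht => (hCW t ht).trans (le_max_left _ _)
  have hZC : ∀ t, 0 ≤ t → |Z t| ≤ C := fun t ht => (hCZ t ht).trans (le_max_right _ _)
  have hC : 0 ≤ C := (abs_nonneg _).trans (hWC 0 le_rfl)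
  have hW1 := hW.differentiable (by norm_num)
  have hZ1 := hZ.differentiable (by norm_num)
  have hPW : Differentiable ℝ fun s => exp (-γ * s) * deriv W s := by fun_prop
  have hPZ : Differentiable ℝ fun s => exp (-γ * s) * deriv Z s := by fun_prop
  have hPD : (fun s => exp (-γ * s) * deriv (fun t => W t - Z t) s) =
      fun s => exp (-γ * s) * deriv W s - exp (-γ * s) * deriv Z s := by
    funext s
    rw [deriv_fun_sub (hW1 s) (hZ1 s), mul_sub]
  have hP' : ∀ t, 0 ≤ t → |deriv (fun s => exp (-γ * s) * deriv (fun t => W t - Z t) s) t| ≤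
      (p - 2 + 1) * C ^ (p - 2) * exp (-t) * |W t - Z t| := by
    intro t ht
    rw [hPD, deriv_fun_sub (hPW t) (hPZ t), hWsol t ht, hZsol t ht]
    have hlip := abs_abs_rpow_mul_self_sub_le (by linarith : 0 < p - 2) (hWC t ht) (hZC t ht)
    calc _ = exp (-t) * |(|W t| ^ (p - 2) * W t) - |Z t| ^ (p - 2) * Z t| := by
          rw [← abs_of_pos (exp_pos (-t)), ← abs_mul, abs_of_pos (exp_pos (-t)), ← abs_neg]
          ring_nf
      _ ≤ exp (-t) * ((p - 2 + 1) * C ^ (p - 2) * |W t - Z t|) := by gcongr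
      _ = _ := by ring
  have hB : ExpBound (fun t => W t - Z t) (2 * C) 0 := fun t ht => by
    simpa [two_mul] using (abs_sub _ _).trans (add_le_add (hWC t ht) (hZC t ht))
  intro t ht
  exact sub_eq_zero.1 <| eqOn_zero_of_abs_deriv_exp_mul_deriv_le (D := fun t => W t - Z t)
    (hW1.sub hZ1) (hPD ▸ hPW.sub hPZ) (by simpa using hWL.sub hZL) hγ0 hγ1 (by positivity) hB hP'
    ht

theorem rescale {a τ : ℝ} {U : ℝ → ℝ} (hU : SolvesODE p γ U) (ha : 0 < a) (hτ : 0 ≤ τ)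
    (hscale : a ^ (p - 2) = exp ((γ - 1) * τ)) : SolvesODE p γ fun t => a * U (t + τ) := by
  intro t ht
  have hflux : (fun s => exp (-γ * s) * deriv (fun t => a * U (t + τ)) s) =
      fun s => a * exp (γ * τ) * (fun r => exp (-γ * r) * deriv U r) (s + τ) := by
    funext s
    have hexp : exp (γ * τ) * exp (-γ * (s + τ)) = exp (-γ * s) := by
      rw [← exp_add]; ring_nf
    rw [deriv_const_mul_field, deriv_comp_add_const]
    linear_combination (-(a * deriv U (s + τ))) * hexp
  have hexp : exp (γ * τ) * exp (-(t + τ)) = exp (-t) * exp ((γ - 1) * τ) := by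
    rw [← exp_add, ← exp_add]; ring_nf
  rw [hflux, deriv_const_mul_field, deriv_comp_add_const (fun r => exp (-γ * r) * deriv U r),
    hU (t + τ) (by linarith), abs_mul, abs_of_pos ha, mul_rpow ha.le (abs_nonneg _), hscale]
  linear_combination (-(a * |U (t + τ)| ^ (p - 2) * U (t + τ))) * hexp

end SolvesODE

theorem ZeroCount.add_one_le_of_eqOn_mul_shift {U V : ℝ → ℝ} {m n : ℕ} {a τ : ℝ}
    (hU : ZeroCount U m) (hV : ZeroCount V n) (ha : a ≠ 0) (hτ : 0 < τ) (hV0 : V 0 = 0)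
    (hVU : EqOn V (fun t => a * U (t + τ)) (Ici 0)) : n + 1 ≤ m := by
  have hzero : ∀ t, 0 ≤ t → V t = 0 → U (t + τ) = 0 := fun t ht hVt =>
    (mul_eq_zero.1 ((hVU ht).symm.trans hVt)).resolve_left ha
  have hsub : insert τ ((· + τ) '' {t | 0 < t ∧ V t = 0}) ⊆ {t | 0 < t ∧ U t = 0} := by
    rintro _ (rfl | ⟨t, ⟨ht, hVt⟩, rfl⟩)
    · exact ⟨hτ, by simpa using hzero 0 le_rfl hV0⟩
    · exact ⟨by linarith, hzero t ht.le hVt⟩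
  have hnot : τ ∉ (· + τ) '' {t | 0 < t ∧ V t = 0} := by
    rintro ⟨t, ⟨ht, -⟩, htτ⟩
    linarith
  have hcard := ncard_le_ncard hsub hU.1
  rwa [ncard_insert_of_notMem hnot (hV.1.image _), ncard_image_of_injective _
    (add_left_injective τ), hV.2, hU.2] at hcard

theorem IsUsol.limit_le {p γ : ℝ} {K : ℕ} {U V : ℝ → ℝ} {LU LV : ℝ} (hp : 2 < p) (hγ0 : 0 ≤ γ)
    (hγ1 : γ < 1) (hU : IsUsol p γ K U) (hV : IsUsol p γ K V) (hLU : Tendsto U atTop (𝓝 LU))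
    (hLV : Tendsto V atTop (𝓝 LV)) (hLV0 : 0 < LV) : LU ≤ LV := by
  by_contra! hlt
  obtain ⟨⟨hU2, -, hUsol⟩, ⟨C, hC⟩, hUzero, -⟩ := hU
  obtain ⟨⟨hV2, hV0, hVsol⟩, hVb, hVzero, -⟩ := hV
  have hLU0 : 0 < LU := hLV0.trans hlt
  set a := LV / LU with hadef
  set τ := (p - 2) / (1 - γ) * log (LU / LV) with hτdef
  have ha : 0 < a := div_pos hLV0 hLU0
  have hτ : 0 < τ := mul_pos (div_pos (by linarith) (by linarith))
    (log_pos ((one_lt_div hLV0).2 hlt))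
  have hscale : a ^ (p - 2) = exp ((γ - 1) * τ) := by
    rw [rpow_def_of_pos ha, hadef, ← inv_div, log_inv, hτdef]
    have h1γ : 1 - γ ≠ 0 := (sub_pos.2 hγ1).ne'
    congr 1
    field_simp
    ring
  have hW2 : ContDiff ℝ 2 fun t => a * U (t + τ) := by fun_prop
  have hWb : BddOn fun t => a * U (t + τ) := ⟨a * C, fun t ht => by
    rw [abs_mul, abs_of_pos ha]
    exact mul_le_mul_of_nonneg_left (hC _ (by linarith)) ha.le⟩
  have hWL : Tendsto (fun t => a * U (t + τ)) atTop (𝓝 LV) := by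
    have := (hLU.comp (tendsto_atTop_add_const_right _ τ tendsto_id)).const_mul a
    rwa [hadef, div_mul_cancel₀ _ hLU0.ne'] at this
  have hVW := SolvesODE.eqOn_of_tendsto hp hγ0 hγ1 hV2 hW2 hVsol
    (SolvesODE.rescale hUsol ha hτ.le hscale) hVb hWb hLV hWL
  have := hUzero.add_one_le_of_eqOn_mul_shift hVzero ha.ne' hτ hV0 hVW
  omega

theorem stmt2_general (N : ℕ) (p : ℝ) (hp : 2 < p) (K : ℕ)
    (γ : ℝ) (hγ0 : 0 < γ) (hγ1 : γ < gammaP N p)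
    (U V : ℝ → ℝ) (hU : IsUsol p γ K U) (hV : IsUsol p γ K V) :
    Set.EqOn U V (Set.Ici 0) := by
  have hγ1' : γ < 1 := hγ1.trans (gammaP_lt_one N p)
  obtain ⟨LU, hLU0, hLU⟩ := hU.2.2.2
  obtain ⟨LV, hLV0, hLV⟩ := hV.2.2.2
  obtain rfl : LU = LV := le_antisymm (hU.limit_le hp hγ0.le hγ1' hV hLU hLV hLV0)
    (hV.limit_le hp hγ0.le hγ1' hU hLV hLU hLU0)
  exact SolvesODE.eqOn_of_tendsto hp hγ0.le hγ1' hU.1.1 hV.1.1 hU.1.2.2 hV.1.2.2 hU.2.1 hV.2.1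
    hLU hLV

/-- uniqueness of bounded solutions of (P_γ), `γ ∈ (0, γ_p)`,
with exactly `K−1` zeros in `(0,∞)` and positive limit at `+∞`. -/
theorem stmt2 (N : ℕ) (hN : 3 ≤ N) (p : ℝ) (hp : 2 < p) (K : ℕ) (hK : 1 ≤ K)
    (γ : ℝ) (hγ0 : 0 < γ) (hγ1 : γ < gammaP N p)
    (U V : ℝ → ℝ) (hU : IsUsol p γ K U) (hV : IsUsol p γ K V) :
    Set.EqOn U V (Set.Ici 0) :=
  stmt2_general N p hp K γ hγ0 hγ1 U V hU hV
end
end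

section
/- Let δ > 0 and let f be a locally integrable function on [0,∞) with ‖f‖_{1,δ} < ∞. Then: (i) for every μ < δ and every t ≥ 0, ∫_t^∞ e^{μs}|f(s)| ds ≤ C_{μ,δ} ‖f‖_{1,δ} e^{(μ−δ)t}, where C_{μ,δ} := max{1, e^μ}/(1 − e^{μ−δ}); and (ii) for every μ > δ and every t ≥ 0, ∫_0^t e^{μs}|f(s)| ds ≤ D_{δ,μ} ‖f‖_{1,δ} e^{(μ−δ)t}, where D_{δ,μ} := e^{2μ−δ}/(e^{μ−δ} − 1). -/
open Real Filter Set MeasureTheory Asymptotics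

noncomputable section

private lemma exp_mul_le_on_Icc' {μ a s : ℝ} (h1 : a ≤ s) (h2 : s ≤ a + 1) :
    Real.exp (μ * s) ≤ max 1 (Real.exp μ) * Real.exp (μ * a) := by
  rcases le_or_gt 0 μ with hμ | hμ
  · calc Real.exp (μ * s) ≤ Real.exp (μ + μ * a) := Real.exp_le_exp.2 (by nlinarith)
      _ = Real.exp μ * Real.exp (μ * a) := Real.exp_add _ _
      _ ≤ max 1 (Real.exp μ) * Real.exp (μ * a) :=
        mul_le_mul_of_nonneg_right (le_max_right _ _) (Real.exp_pos _).le
  · calc Real.exp (μ * s) ≤ Real.exp (μ * a) := Real.exp_le_exp.2 (by nlinarith)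
      _ = 1 * Real.exp (μ * a) := (one_mul _).symm
      _ ≤ max 1 (Real.exp μ) * Real.exp (μ * a) :=
        mul_le_mul_of_nonneg_right (le_max_left _ _) (Real.exp_pos _).le

private lemma gInt' {f : ℝ → ℝ} {a b : ℝ} (hfa : IntegrableOn f (Set.Icc a b)) (μ : ℝ) :
    IntegrableOn (fun s => Real.exp (μ * s) * |f s|) (Set.Icc a b) := by
  apply hfa.abs.bdd_mul (c := Real.exp (|μ| * max |a| |b|))
  · exact (Real.continuous_exp.comp (continuous_const.mul continuous_id)).aestronglyMeasurable
  · refine (ae_restrict_iff' measurableSet_Icc).2 (ae_of_all _ fun x hx => ?_)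
    rw [Real.norm_eq_abs, Real.abs_exp]
    apply Real.exp_le_exp.2
    calc μ * x ≤ |μ * x| := le_abs_self _
      _ = |μ| * |x| := abs_mul _ _
      _ ≤ |μ| * max |a| |b| :=
        mul_le_mul_of_nonneg_left (abs_le_max_abs_abs hx.1 hx.2) (abs_nonneg _)

private lemma key_interval' {δ A μ a : ℝ} {f : ℝ → ℝ}
    (hfa : IntegrableOn f (Set.Icc a (a + 1)))
    (hA : Real.exp (δ * a) * (∫ s in a..(a + 1), |f s|) ≤ A) :
    (∫ s in a..(a + 1), Real.exp (μ * s) * |f s|)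
      ≤ max 1 (Real.exp μ) * A * Real.exp ((μ - δ) * a) := by
  have hab : a ≤ a + 1 := by linarith
  have huI : Set.uIcc a (a + 1) = Set.Icc a (a + 1) := Set.uIcc_of_le hab
  have h1 : IntervalIntegrable (fun s => Real.exp (μ * s) * |f s|) volume a (a + 1) := by
    apply MeasureTheory.IntegrableOn.intervalIntegrable
    rw [huI]; exact gInt' hfa μ
  have h2 : IntervalIntegrable
      (fun s => max 1 (Real.exp μ) * Real.exp (μ * a) * |f s|) volume a (a + 1) := by
    apply MeasureTheory.IntegrableOn.intervalIntegrable
    rw [huI]; exact hfa.abs.const_mul _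
  have step1 : (∫ s in a..(a + 1), Real.exp (μ * s) * |f s|)
      ≤ ∫ s in a..(a + 1), max 1 (Real.exp μ) * Real.exp (μ * a) * |f s| := by
    refine intervalIntegral.integral_mono_on hab h1 h2 fun x hx => ?_
    exact mul_le_mul_of_nonneg_right (exp_mul_le_on_Icc' hx.1 hx.2) (abs_nonneg _)
  have step2 : (∫ s in a..(a + 1), max 1 (Real.exp μ) * Real.exp (μ * a) * |f s|)
      = max 1 (Real.exp μ) * Real.exp (μ * a) * ∫ s in a..(a + 1), |f s| :=
    intervalIntegral.integral_const_mul _ _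
  have hI : (∫ s in a..(a + 1), |f s|) ≤ A * Real.exp (-(δ * a)) := by
    have hp := Real.exp_pos (δ * a)
    rw [Real.exp_neg, ← div_eq_mul_inv, le_div_iff₀ hp]
    nlinarith [hA]
  have hM : (0:ℝ) ≤ max 1 (Real.exp μ) * Real.exp (μ * a) := by positivity
  calc (∫ s in a..(a + 1), Real.exp (μ * s) * |f s|)
      ≤ max 1 (Real.exp μ) * Real.exp (μ * a) * ∫ s in a..(a + 1), |f s| := step1.trans_eq step2
    _ ≤ max 1 (Real.exp μ) * Real.exp (μ * a) * (A * Real.exp (-(δ * a))) :=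
        mul_le_mul_of_nonneg_left hI hM
    _ = max 1 (Real.exp μ) * A * Real.exp ((μ - δ) * a) := by
        rw [show (μ - δ) * a = μ * a + -(δ * a) by ring, Real.exp_add]; ring

private lemma sum_bound' {δ A μ t : ℝ} {f : ℝ → ℝ} (ht : 0 ≤ t)
    (hf : MeasureTheory.LocallyIntegrableOn f (Set.Ici 0))
    (hA : ∀ a : ℝ, 0 ≤ a → Real.exp (δ * a) * (∫ s in a..(a + 1), |f s|) ≤ A) (N : ℕ) :
    (∫ s in t..(t + N), Real.exp (μ * s) * |f s|)
      ≤ ∑ n ∈ Finset.range N,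
          max 1 (Real.exp μ) * A * Real.exp ((μ - δ) * (t + n)) := by
  have hint : ∀ n : ℕ, IntegrableOn f (Set.Icc (t + n) (t + n + 1)) := fun n =>
    hf.integrableOn_compact_subset
      (Set.Icc_subset_Ici_iff (by linarith [Nat.cast_nonneg (α := ℝ) n]) |>.2
        (by positivity)) isCompact_Icc
  have hadj : ∀ k < N, IntervalIntegrable (fun s => Real.exp (μ * s) * |f s|) volume
      (t + k) (t + (k + 1 : ℕ)) := by
    intro k _
    apply MeasureTheory.IntegrableOn.intervalIntegrable
    have : Set.uIcc (t + k) (t + (k + 1 : ℕ)) = Set.Icc (t + k) (t + k + 1) := by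
      rw [Set.uIcc_of_le (by push_cast; linarith)]
      push_cast; ring_nf
    rw [this]; exact gInt' (hint k) μ
  have hsum := intervalIntegral.sum_integral_adjacent_intervals
    (a := fun n : ℕ => t + n) (μ := volume) (f := fun s => Real.exp (μ * s) * |f s|) hadj
  simp only [Nat.cast_zero, add_zero] at hsum
  rw [← hsum]
  refine Finset.sum_le_sum fun n _ => ?_
  have e1 : t + ((n : ℝ) + 1) = (t + n) + 1 := by ring
  have := key_interval' (μ := μ) (hint n) (hA (t + n) (by positivity))
  calc (∫ s in (t + (n:ℝ))..(t + ((n:ℕ) + 1 : ℕ)), Real.exp (μ * s) * |f s|)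
      = ∫ s in (t + (n:ℝ))..((t + n) + 1), Real.exp (μ * s) * |f s| := by push_cast; rw [e1]
    _ ≤ max 1 (Real.exp μ) * A * Real.exp ((μ - δ) * (t + n)) := this

/-- weighted integral estimates for functions with finite
`‖f‖_{1,δ} = sup_{t ≥ 0} e^{δt}∫_t^{t+1}|f|` (here `A` is any such bound). -/
theorem stmt11 (δ : ℝ) (hδ : 0 < δ) (f : ℝ → ℝ)
    (hf : MeasureTheory.LocallyIntegrableOn f (Set.Ici 0))
    (A : ℝ)
    (hA : ∀ t : ℝ, 0 ≤ t → Real.exp (δ * t) * (∫ s in t..(t + 1), |f s|) ≤ A) :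
    (∀ μ : ℝ, μ < δ → ∀ t : ℝ, 0 ≤ t →
      (∫ s in Set.Ioi t, Real.exp (μ * s) * |f s|)
        ≤ max 1 (Real.exp μ) / (1 - Real.exp (μ - δ)) * A * Real.exp ((μ - δ) * t)) ∧
    (∀ μ : ℝ, δ < μ → ∀ t : ℝ, 0 ≤ t →
      (∫ s in (0:ℝ)..t, Real.exp (μ * s) * |f s|)
        ≤ Real.exp (2 * μ - δ) / (Real.exp (μ - δ) - 1) * A * Real.exp ((μ - δ) * t)) := by
  have hA0 : 0 ≤ A := by
    refine le_trans ?_ (hA 0 le_rfl)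
    have h0 : (0:ℝ) ≤ ∫ s in (0:ℝ)..(0 + 1), |f s| :=
      intervalIntegral.integral_nonneg (by norm_num) fun x _ => abs_nonneg _
    exact mul_nonneg (Real.exp_pos _).le h0
  constructor
  · -- part (i)
    intro μ hμ t ht
    have hr0 : (0:ℝ) < Real.exp (μ - δ) := Real.exp_pos _
    have hr1 : Real.exp (μ - δ) < 1 := Real.exp_lt_one_iff.2 (by linarith)
    have h1r : (0:ℝ) < 1 - Real.exp (μ - δ) := by linarith
    have hb : ∀ N : ℕ, (∫ s in t..(t + N), Real.exp (μ * s) * |f s|)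
        ≤ max 1 (Real.exp μ) / (1 - Real.exp (μ - δ)) * A * Real.exp ((μ - δ) * t) := by
      intro N
      have h1 := sum_bound' (δ := δ) (A := A) (μ := μ) ht hf (fun a ha => hA a ha) N
      have h2 : ∑ n ∈ Finset.range N,
            max 1 (Real.exp μ) * A * Real.exp ((μ - δ) * (t + n))
          = max 1 (Real.exp μ) * A * Real.exp ((μ - δ) * t)
              * ∑ n ∈ Finset.range N, Real.exp (μ - δ) ^ n := by
        rw [Finset.mul_sum]
        refine Finset.sum_congr rfl fun n _ => ?_
        have e1 : Real.exp ((μ - δ) * n) = Real.exp (μ - δ) ^ n := by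
          rw [mul_comm, Real.exp_nat_mul]
        rw [mul_add, Real.exp_add, e1]; ring
      have hsum_le : ∑ n ∈ Finset.range N, Real.exp (μ - δ) ^ n
          ≤ (1 - Real.exp (μ - δ))⁻¹ := by
        calc ∑ n ∈ Finset.range N, Real.exp (μ - δ) ^ n
            ≤ ∑' n : ℕ, Real.exp (μ - δ) ^ n :=
              Summable.sum_le_tsum _ (fun i _ => by positivity)
                (summable_geometric_of_lt_one hr0.le hr1)
          _ = (1 - Real.exp (μ - δ))⁻¹ := tsum_geometric_of_lt_one hr0.le hr1
      calc (∫ s in t..(t + N), Real.exp (μ * s) * |f s|)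
          ≤ max 1 (Real.exp μ) * A * Real.exp ((μ - δ) * t)
              * ∑ n ∈ Finset.range N, Real.exp (μ - δ) ^ n := h1.trans_eq h2
        _ ≤ max 1 (Real.exp μ) * A * Real.exp ((μ - δ) * t)
              * (1 - Real.exp (μ - δ))⁻¹ := by
            refine mul_le_mul_of_nonneg_left hsum_le ?_
            have : (0:ℝ) ≤ max 1 (Real.exp μ) := le_trans zero_le_one (le_max_left _ _)
            positivity
        _ = max 1 (Real.exp μ) / (1 - Real.exp (μ - δ)) * A * Real.exp ((μ - δ) * t) := by
            rw [div_eq_mul_inv]; ring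
    by_cases hIntg : IntegrableOn (fun s => Real.exp (μ * s) * |f s|) (Set.Ioi t)
    · have tend := MeasureTheory.intervalIntegral_tendsto_integral_Ioi t hIntg
        (tendsto_id (α := ℝ))
      refine le_of_tendsto tend ?_
      filter_upwards [eventually_ge_atTop t] with b hb'
      have hbN : b ≤ t + (⌈b - t⌉₊ : ℕ) := by
        have := Nat.le_ceil (b - t); push_cast at this ⊢; linarith
      have hIi : IntervalIntegrable (fun s => Real.exp (μ * s) * |f s|) volume t
          (t + (⌈b - t⌉₊ : ℕ)) := by
        rw [intervalIntegrable_iff_integrableOn_Ioc_of_le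
          (le_add_of_nonneg_right (by positivity) : t ≤ t + (⌈b - t⌉₊ : ℕ))]
        exact hIntg.mono_set Set.Ioc_subset_Ioi_self
      have hmono : (∫ s in t..(id b), Real.exp (μ * s) * |f s|)
          ≤ ∫ s in t..(t + (⌈b - t⌉₊ : ℕ)), Real.exp (μ * s) * |f s| := by
        refine intervalIntegral.integral_mono_interval le_rfl hb' hbN ?_ hIi
        exact ae_restrict_of_ae (ae_of_all _ fun x =>
          mul_nonneg (Real.exp_pos _).le (abs_nonneg _))
      exact hmono.trans (hb _)
    · rw [MeasureTheory.integral_undef hIntg]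
      have hMn : (0:ℝ) ≤ max 1 (Real.exp μ) := le_trans zero_le_one (le_max_left _ _)
      exact mul_nonneg (mul_nonneg (div_nonneg hMn h1r.le) hA0) (Real.exp_pos _).le
  · -- part (ii)
    intro μ hμ t ht
    have hr1 : (1:ℝ) < Real.exp (μ - δ) := by
      rw [← Real.exp_zero]; exact Real.exp_lt_exp.2 (by linarith)
    have hrpos : (0:ℝ) < Real.exp (μ - δ) - 1 := by linarith
    have hM : max 1 (Real.exp μ) = Real.exp μ :=
      max_eq_right (Real.one_le_exp (by linarith))
    have htN : t ≤ (⌈t⌉₊ : ℝ) := Nat.le_ceil t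
    have hN1 : ((⌈t⌉₊ : ℕ) : ℝ) ≤ t + 1 := (Nat.ceil_lt_add_one ht).le
    have hIcc : IntegrableOn f (Set.Icc 0 ((⌈t⌉₊ : ℕ) : ℝ)) :=
      hf.integrableOn_compact_subset Set.Icc_subset_Ici_self isCompact_Icc
    have hIi : IntervalIntegrable (fun s => Real.exp (μ * s) * |f s|) volume 0
        ((⌈t⌉₊ : ℕ) : ℝ) := by
      apply MeasureTheory.IntegrableOn.intervalIntegrable
      rw [Set.uIcc_of_le (by positivity)]
      exact gInt' hIcc μ
    have step0 : (∫ s in (0:ℝ)..t, Real.exp (μ * s) * |f s|)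
        ≤ ∫ s in (0:ℝ)..((⌈t⌉₊ : ℕ) : ℝ), Real.exp (μ * s) * |f s| := by
      refine intervalIntegral.integral_mono_interval le_rfl ht htN ?_ hIi
      exact ae_restrict_of_ae (ae_of_all _ fun x =>
        mul_nonneg (Real.exp_pos _).le (abs_nonneg _))
    have step1 : (∫ s in (0:ℝ)..((⌈t⌉₊ : ℕ) : ℝ), Real.exp (μ * s) * |f s|)
        ≤ ∑ n ∈ Finset.range ⌈t⌉₊,
            max 1 (Real.exp μ) * A * Real.exp ((μ - δ) * (0 + n)) := by
      have := sum_bound' (δ := δ) (A := A) (μ := μ) (t := 0) le_rfl hf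
        (fun a ha => hA a ha) ⌈t⌉₊
      simpa using this
    have h2 : ∑ n ∈ Finset.range ⌈t⌉₊,
          max 1 (Real.exp μ) * A * Real.exp ((μ - δ) * (0 + n))
        = Real.exp μ * A * ∑ n ∈ Finset.range ⌈t⌉₊, Real.exp (μ - δ) ^ n := by
      rw [Finset.mul_sum, hM]
      refine Finset.sum_congr rfl fun n _ => ?_
      have e1 : Real.exp ((μ - δ) * n) = Real.exp (μ - δ) ^ n := by
        rw [mul_comm, Real.exp_nat_mul]
      rw [zero_add, e1]
    have hgeom : ∑ n ∈ Finset.range ⌈t⌉₊, Real.exp (μ - δ) ^ n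
        ≤ Real.exp ((μ - δ) * (t + 1)) / (Real.exp (μ - δ) - 1) := by
      rw [geom_sum_eq hr1.ne' ⌈t⌉₊]
      have hrN : Real.exp (μ - δ) ^ (⌈t⌉₊ : ℕ) ≤ Real.exp ((μ - δ) * (t + 1)) := by
        rw [← Real.exp_nat_mul]
        exact Real.exp_le_exp.2 (by nlinarith)
      gcongr
      linarith
    calc (∫ s in (0:ℝ)..t, Real.exp (μ * s) * |f s|)
        ≤ Real.exp μ * A * ∑ n ∈ Finset.range ⌈t⌉₊, Real.exp (μ - δ) ^ n :=
          step0.trans (step1.trans_eq h2)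
      _ ≤ Real.exp μ * A * (Real.exp ((μ - δ) * (t + 1)) / (Real.exp (μ - δ) - 1)) := by
          refine mul_le_mul_of_nonneg_left hgeom ?_
          positivity
      _ = Real.exp (2 * μ - δ) / (Real.exp (μ - δ) - 1) * A * Real.exp ((μ - δ) * t) := by
          rw [show (μ - δ) * (t + 1) = (μ - δ) + (μ - δ) * t by ring, Real.exp_add,
            show 2 * μ - δ = μ + (μ - δ) by ring, Real.exp_add]
          field_simp
end
end

section
/- Let δ, γ, μ ≥ 0 be real numbers with δ < √(γ²/4 + μ²) − γ/2. Then for every locally integrable function g on [0,∞) with ‖g‖_{1,δ} < ∞ there exists exactly one function Ψ on [0,∞) such that: Ψ is C¹ with Ψ(0) = 0, sup_{t≥0} e^{δt}(|Ψ(t)| + |Ψ'(t)|) < ∞, Ψ' is locally absolutely continuous with ‖Ψ''‖_{1,δ} < ∞, and −Ψ''(t) + γΨ'(t) + μ²Ψ(t) = g(t) for almost every t ∈ [0,∞). Moreover there is a constant C = C(δ,γ,μ) with sup_{t≥0} e^{δt}(|Ψ(t)| + |Ψ'(t)|) + ‖Ψ''‖_{1,δ} ≤ C ‖g‖_{1,δ}.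 -/
/-!
The operator factors as `-Ψ'' + γΨ' + μ²Ψ = -(d/dt - a)(d/dt - b)Ψ` with the roots
`a = γ/2 + √(γ²/4 + μ²) > 0` and `b = γ/2 - √(γ²/4 + μ²) < -δ`, so a solution comes from two
first-order problems. First, `u = Ψ' - bΨ` must solve `u' = a u - g`, whose only solution that
stays bounded is `u(t) = ∫_t^∞ e^{a(t-s)} g(s) ds`; splitting `[t, ∞)` into unit intervals gives
`|u(t)| ≤ ‖g‖_{1,δ} e^{-δt} / (1 - e^{-(a+δ)})`. Then `Ψ(t) = ∫_0^t e^{b(t-s)} u(s) ds`, and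
`b + δ < 0` carries the weight `e^{-δt}` over to `Ψ` and `Ψ' = u + bΨ`, after which the equation
bounds `Ψ''`. For uniqueness, the difference `Φ` of two solutions satisfies `Φ' - bΦ = c e^{at}`,
which is bounded only if `c = 0`; then `Φ(0) = 0` forces `Φ = 0`.
-/
open Real Filter Set MeasureTheory Asymptotics

noncomputable section

/-- `A` is an upper bound for `‖f‖_{1,δ} = sup_{t≥0} e^{δt}∫_t^{t+1}|f|`. -/
def Norm1Bound (δ : ℝ) (f : ℝ → ℝ) (A : ℝ) : Prop :=
  ∀ t : ℝ, 0 ≤ t → Real.exp (δ * t) * (∫ s in t..(t + 1), |f s|) ≤ A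

/-- `Ψ` belongs to `W²_δ` with (a.e.) second derivative `h` and solves
`−Ψ'' + γΨ' + μ²Ψ = g` a.e. on `[0,∞)`, `Ψ(0) = 0`. -/
def W2Sol (δ γ μ : ℝ) (g Ψ h : ℝ → ℝ) : Prop :=
  ContDiff ℝ 1 Ψ ∧ Ψ 0 = 0 ∧
  (∃ B : ℝ, ∀ t : ℝ, 0 ≤ t → Real.exp (δ * t) * (|Ψ t| + |deriv Ψ t|) ≤ B) ∧
  MeasureTheory.LocallyIntegrableOn h (Set.Ici 0) ∧
  (∀ t : ℝ, 0 ≤ t → deriv Ψ t = deriv Ψ 0 + ∫ s in (0:ℝ)..t, h s) ∧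
  (∃ B : ℝ, Norm1Bound δ h B) ∧
  (∀ᵐ t ∂(volume.restrict (Set.Ici (0:ℝ))),
    -h t + γ * deriv Ψ t + μ ^ 2 * Ψ t = g t)

def NormInfBound (δ : ℝ) (f : ℝ → ℝ) (B : ℝ) : Prop :=
  ∀ t : ℝ, 0 ≤ t → exp (δ * t) * |f t| ≤ B

lemma MeasureTheory.LocallyIntegrableOn.intervalIntegrable_of_nonneg {f : ℝ → ℝ}
    (hf : LocallyIntegrableOn f (Ici 0)) {x y : ℝ} (hx : 0 ≤ x) (hy : 0 ≤ y) :
    IntervalIntegrable f volume x y :=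
  (hf.integrableOn_compact_subset (fun _ hs => le_trans (le_min hx hy) hs.1)
    isCompact_uIcc).intervalIntegrable

lemma MeasureTheory.LocallyIntegrableOn.locallyIntegrable_indicator {X E : Type*}
    [TopologicalSpace X] [MeasurableSpace X] [OpensMeasurableSpace X] [LocallyCompactSpace X]
    [T2Space X]
    [NormedAddCommGroup E] {μ : Measure X} {f : X → E} {s : Set X}
    (hf : LocallyIntegrableOn f s μ) (hs : IsClosed s) :
    LocallyIntegrable (s.indicator f) μ := by
  rw [locallyIntegrable_iff]
  intro k hk
  rw [IntegrableOn, integrable_indicator_iff hs.measurableSet, IntegrableOn,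
    Measure.restrict_restrict hs.measurableSet]
  exact hf.integrableOn_compact_subset inter_subset_left (hk.inter_left hs)

lemma MeasureTheory.LocallyIntegrable.exp_mul {f : ℝ → ℝ} (hf : LocallyIntegrable f) (c : ℝ) :
    LocallyIntegrable (fun s => exp (-(c * s)) * f s) := by
  rw [locallyIntegrable_iff]
  exact fun k hk => (hf.integrableOn_isCompact hk).continuousOn_mul (by fun_prop) hk

namespace Norm1Bound

variable {δ c A A' : ℝ} {f f' : ℝ → ℝ}

lemma nonneg (hf : Norm1Bound δ f A) : 0 ≤ A := by
  simpa using (intervalIntegral.integral_nonneg zero_le_one fun s _ => abs_nonneg (f s)).trans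
    (by simpa using hf 0 le_rfl)

lemma mono (hf : Norm1Bound δ f A) (hA : A ≤ A') : Norm1Bound δ f A' :=
  fun t ht => (hf t ht).trans hA

lemma congr_ae (hf : Norm1Bound δ f A) (hff' : f =ᵐ[volume.restrict (Ici 0)] f') :
    Norm1Bound δ f' A := by
  intro t ht
  have hsub : uIoc t (t + 1) ⊆ Ici 0 := by
    rw [uIoc_of_le (by linarith)]
    exact fun s hs => ht.trans hs.1.le
  have heq : ∫ s in t..t + 1, |f s| = ∫ s in t..t + 1, |f' s| :=
    intervalIntegral.integral_congr_ae_restrict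
      ((ae_restrict_of_ae_restrict_of_subset hsub hff').mono fun s hs => congrArg abs hs)
  exact heq ▸ hf t ht

lemma sub (hf : Norm1Bound δ f A) (hf' : Norm1Bound δ f' A')
    (hfi : LocallyIntegrableOn f (Ici 0)) (hfi' : LocallyIntegrableOn f' (Ici 0)) :
    Norm1Bound δ (f - f') (A + A') := by
  intro t ht
  have hI := hfi.intervalIntegrable_of_nonneg ht (by linarith : (0 : ℝ) ≤ t + 1)
  have hI' := hfi'.intervalIntegrable_of_nonneg ht (by linarith : (0 : ℝ) ≤ t + 1)
  calc exp (δ * t) * ∫ s in t..t + 1, |(f - f') s|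
      ≤ exp (δ * t) * ∫ s in t..t + 1, (|f s| + |f' s|) := by
        gcongr
        exact intervalIntegral.integral_mono_on (by linarith) (hI.sub hI').abs
          (hI.abs.add hI'.abs) fun s _ => abs_sub _ _
    _ = exp (δ * t) * (∫ s in t..t + 1, |f s|) + exp (δ * t) * ∫ s in t..t + 1, |f' s| := by
        rw [intervalIntegral.integral_add hI.abs hI'.abs, mul_add]
    _ ≤ A + A' := add_le_add (hf t ht) (hf' t ht)

lemma integral_abs_le (hf : Norm1Bound δ f A) {t : ℝ} (ht : 0 ≤ t) :
    ∫ s in t..t + 1, |f s| ≤ A * exp (-(δ * t)) := by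
  rw [exp_neg, ← div_eq_mul_inv, le_div_iff₀ (exp_pos _), mul_comm]
  exact hf t ht

lemma exp_mul (hf : Norm1Bound δ f A) (hfi : LocallyIntegrableOn f (Ici 0)) (hc : 0 ≤ c) :
    Norm1Bound (c + δ) (fun s => exp (-(c * s)) * f s) A := by
  intro t ht
  have hI := hfi.intervalIntegrable_of_nonneg ht (by linarith : (0 : ℝ) ≤ t + 1)
  calc exp ((c + δ) * t) * ∫ s in t..t + 1, |exp (-(c * s)) * f s|
      ≤ exp ((c + δ) * t) * ∫ s in t..t + 1, exp (-(c * t)) * |f s| := by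
        gcongr
        refine intervalIntegral.integral_mono_on (by linarith)
          (hI.continuousOn_mul (by fun_prop)).abs (hI.abs.const_mul _) fun s hs => ?_
        rw [abs_mul, abs_of_pos (exp_pos _)]
        gcongr
        exact hs.1
    _ = exp (δ * t) * ∫ s in t..t + 1, |f s| := by
        rw [intervalIntegral.integral_const_mul, ← mul_assoc, ← exp_add]
        ring_nf
    _ ≤ A := hf t ht

lemma integral_abs_le_geometric (hc : 0 < c) (hf : Norm1Bound c f A)
    (hfi : LocallyIntegrableOn f (Ici 0)) (n : ℕ) {t : ℝ} (ht : 0 ≤ t) :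
    ∫ s in t..t + n, |f s| ≤ A * exp (-(c * t)) / (1 - exp (-c)) := by
  have hr : 0 < 1 - exp (-c) := sub_pos.2 (exp_lt_one_iff.2 (by linarith))
  induction n generalizing t with
  | zero => simpa using div_nonneg (mul_nonneg hf.nonneg (exp_pos _).le) hr.le
  | succ n ih =>
    have hsplit := intervalIntegral.integral_add_adjacent_intervals
      ((hfi.intervalIntegrable_of_nonneg ht (by linarith : (0 : ℝ) ≤ t + 1)).abs)
      ((hfi.intervalIntegrable_of_nonneg (by linarith : (0 : ℝ) ≤ t + 1)
        (by positivity : (0 : ℝ) ≤ t + 1 + n)).abs)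
    have hB : A * exp (-(c * t)) + A * exp (-(c * (t + 1))) / (1 - exp (-c))
        = A * exp (-(c * t)) / (1 - exp (-c)) := by
      rw [show -(c * (t + 1)) = -(c * t) + -c by ring, exp_add]
      field_simp
      ring
    push_cast
    rw [show t + (n + 1 : ℝ) = t + 1 + n by ring, ← hsplit, ← hB]
    exact add_le_add (hf.integral_abs_le ht) (ih (by linarith))

lemma integrableOn_Ioi (hc : 0 < c) (hf : Norm1Bound c f A)
    (hfi : LocallyIntegrableOn f (Ici 0)) {t : ℝ} (ht : 0 ≤ t) : IntegrableOn f (Ioi t) :=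
  integrableOn_Ioi_of_intervalIntegral_norm_bounded (b := fun n : ℕ => t + n) _ t
    (fun n => (hfi.intervalIntegrable_of_nonneg ht (by positivity : (0 : ℝ) ≤ t + n)).1)
    (tendsto_atTop_add_const_left _ t tendsto_natCast_atTop_atTop)
    (Eventually.of_forall fun n => hf.integral_abs_le_geometric hc hfi n ht)

lemma integral_Ioi_abs_le (hc : 0 < c) (hf : Norm1Bound c f A)
    (hfi : LocallyIntegrableOn f (Ici 0)) {t : ℝ} (ht : 0 ≤ t) :
    ∫ s in Ioi t, |f s| ≤ A * exp (-(c * t)) / (1 - exp (-c)) :=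
  le_of_tendsto (intervalIntegral_tendsto_integral_Ioi (b := fun n : ℕ => t + n) t
      (hf.integrableOn_Ioi hc hfi ht).abs
      (tendsto_atTop_add_const_left _ t tendsto_natCast_atTop_atTop))
    (Eventually.of_forall fun n => hf.integral_abs_le_geometric hc hfi n ht)

end Norm1Bound

namespace NormInfBound

variable {δ B B' : ℝ} {f f' : ℝ → ℝ}

lemma nonneg (hf : NormInfBound δ f B) : 0 ≤ B :=
  (abs_nonneg (f 0)).trans (by simpa using hf 0 le_rfl)

lemma congr (hf : NormInfBound δ f B) (hff' : EqOn f f' (Ici 0)) : NormInfBound δ f' B :=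
  fun t ht => hff' ht ▸ hf t ht

lemma abs_le (hf : NormInfBound δ f B) {t : ℝ} (ht : 0 ≤ t) : |f t| ≤ B * exp (-(δ * t)) := by
  rw [exp_neg, ← div_eq_mul_inv, le_div_iff₀ (exp_pos _), mul_comm]
  exact hf t ht

lemma add (hf : NormInfBound δ f B) (hf' : NormInfBound δ f' B') :
    NormInfBound δ (fun t => f t + f' t) (B + B') := fun t ht =>
  calc exp (δ * t) * |f t + f' t| ≤ exp (δ * t) * |f t| + exp (δ * t) * |f' t| := by
        rw [← mul_add]; gcongr; exact abs_add_le _ _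
    _ ≤ B + B' := add_le_add (hf t ht) (hf' t ht)

lemma const_mul (hf : NormInfBound δ f B) (c : ℝ) :
    NormInfBound δ (fun t => c * f t) (|c| * B) := fun t ht => by
  rw [abs_mul, mul_left_comm]
  exact mul_le_mul_of_nonneg_left (hf t ht) (abs_nonneg c)

lemma norm1Bound (hf : NormInfBound δ f B) (hδ : 0 ≤ δ) (hfc : Continuous f) :
    Norm1Bound δ f B := fun t ht =>
  calc exp (δ * t) * ∫ s in t..t + 1, |f s|
      ≤ exp (δ * t) * ∫ _ in t..t + 1, B * exp (-(δ * t)) := by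
        gcongr
        refine intervalIntegral.integral_mono_on (by linarith)
          (hfc.abs.intervalIntegrable _ _) intervalIntegrable_const fun s hs => ?_
        calc |f s| ≤ B * exp (-(δ * s)) := hf.abs_le (ht.trans hs.1)
          _ ≤ B * exp (-(δ * t)) := by
            gcongr
            · exact hf.nonneg
            · exact hs.1
    _ = B := by
        have h : exp (δ * t) * exp (-(δ * t)) = 1 := by rw [← exp_add]; simp
        rw [intervalIntegral.integral_const, smul_eq_mul]
        linear_combination B * h

lemma exp_mul_abs_add_abs_le (hf : NormInfBound δ f B) (hf' : NormInfBound δ f' B') {t : ℝ}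
    (ht : 0 ≤ t) :
    exp (δ * t) * (|f t| + |f' t|) ≤ B + B' := by
  rw [mul_add]
  exact add_le_add (hf t ht) (hf' t ht)

end NormInfBound

lemma integral_exp_mul_le {κ : ℝ} (hκ : 0 < κ) (t : ℝ) :
    ∫ s in (0 : ℝ)..t, exp (κ * s) ≤ exp (κ * t) / κ := by
  rw [intervalIntegral.integral_comp_mul_left (fun x => exp x) hκ.ne', integral_exp, smul_eq_mul,
    mul_zero, exp_zero, inv_mul_eq_div]
  gcongr
  linarith

/-- The solution of `y' = c y + f`, `y 0 = 0`. -/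
def duhamel (c : ℝ) (f : ℝ → ℝ) (t : ℝ) : ℝ :=
  exp (c * t) * ∫ s in (0 : ℝ)..t, exp (-(c * s)) * f s

section Duhamel

variable {δ c K : ℝ} {f : ℝ → ℝ}

@[simp]
lemma duhamel_zero : duhamel c f 0 = 0 := by simp [duhamel]

lemma hasDerivAt_duhamel (hf : Continuous f) (t : ℝ) :
    HasDerivAt (duhamel c f) (c * duhamel c f t + f t) t := by
  have hprim : HasDerivAt (fun t => ∫ s in (0 : ℝ)..t, exp (-(c * s)) * f s)
      (exp (-(c * t)) * f t) t :=
    ((by fun_prop : Continuous fun s => exp (-(c * s))).mul hf).integral_hasStrictDerivAt 0 t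
      |>.hasDerivAt
  have hexp : HasDerivAt (fun t => exp (c * t)) (exp (c * t) * c) t := by
    simpa using ((hasDerivAt_id t).const_mul c).exp
  have h : exp (c * t) * exp (-(c * t)) = 1 := by rw [← exp_add]; simp
  refine (hexp.fun_mul hprim).congr_deriv ?_
  simp only [duhamel]
  linear_combination f t * h

lemma contDiff_duhamel (hf : Continuous f) : ContDiff ℝ 1 (duhamel c f) := by
  rw [contDiff_one_iff_deriv]
  refine ⟨fun t => (hasDerivAt_duhamel hf t).differentiableAt, ?_⟩
  rw [funext fun t => (hasDerivAt_duhamel (c := c) hf t).deriv]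
  exact (continuous_const.mul (continuous_iff_continuousAt.2 fun t =>
    (hasDerivAt_duhamel hf t).continuousAt)).add hf

lemma NormInfBound.duhamel (hf : NormInfBound δ f K) (hfc : Continuous f) (hc : c + δ < 0) :
    NormInfBound δ (duhamel c f) (K / -(c + δ)) := by
  intro t ht
  have hκ : 0 < -(c + δ) := by linarith
  have hint : |∫ s in (0 : ℝ)..t, exp (-(c * s)) * f s| ≤ K * (exp (-(c + δ) * t) / -(c + δ)) :=
    calc |∫ s in (0 : ℝ)..t, exp (-(c * s)) * f s|
        ≤ ∫ s in (0 : ℝ)..t, K * exp (-(c + δ) * s) := by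
          refine (intervalIntegral.abs_integral_le_integral_abs ht).trans
            (intervalIntegral.integral_mono_on ht
              ((by fun_prop : Continuous _).intervalIntegrable _ _)
              ((by fun_prop : Continuous _).intervalIntegrable _ _) fun s hs => ?_)
          rw [abs_mul, abs_of_pos (exp_pos _), mul_comm, ← le_div_iff₀ (exp_pos _), mul_div_assoc,
            ← exp_sub, show -(c + δ) * s - -(c * s) = -(δ * s) by ring]
          exact hf.abs_le hs.1
      _ ≤ K * (exp (-(c + δ) * t) / -(c + δ)) := by
          rw [intervalIntegral.integral_const_mul]
          exact mul_le_mul_of_nonneg_left (integral_exp_mul_le hκ t) hf.nonneg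
  calc exp (δ * t) * |_root_.duhamel c f t|
      = exp ((c + δ) * t) * |∫ s in (0 : ℝ)..t, exp (-(c * s)) * f s| := by
        rw [_root_.duhamel, abs_mul, abs_of_pos (exp_pos _), ← mul_assoc, ← exp_add]
        congr 2
        ring
    _ ≤ exp ((c + δ) * t) * (K * (exp (-(c + δ) * t) / -(c + δ))) := by gcongr
    _ = K / -(c + δ) := by
        rw [show exp ((c + δ) * t) * (K * (exp (-(c + δ) * t) / -(c + δ)))
            = K / -(c + δ) * (exp ((c + δ) * t) * exp (-(c + δ) * t)) by ring, ← exp_add,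
          show (c + δ) * t + -(c + δ) * t = 0 by ring, exp_zero, mul_one]

end Duhamel

/-- The solution of `y' = c y - f` that stays bounded as `t → ∞`. -/
def duhamelTail (c : ℝ) (f : ℝ → ℝ) (t : ℝ) : ℝ :=
  exp (c * t) * ∫ s in Ioi t, exp (-(c * s)) * f s

section DuhamelTail

variable {δ c A : ℝ} {f : ℝ → ℝ}

lemma integrableOn_Ioi_exp_mul (hf : LocallyIntegrable f) (hA : Norm1Bound δ f A) (hc : 0 ≤ c)
    (hcδ : 0 < c + δ) (t : ℝ) : IntegrableOn (fun s => exp (-(c * s)) * f s) (Ioi t) := by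
  have h0 := (hA.exp_mul (hf.locallyIntegrableOn _) hc).integrableOn_Ioi hcδ
    ((hf.exp_mul c).locallyIntegrableOn _) le_rfl
  refine (((hf.exp_mul c).integrableOn_isCompact (isCompact_Icc (a := min t 0) (b := 0))).union
    h0).mono_set ?_
  exact fun s (hs : t < s) => (le_or_gt s 0).imp (fun h => ⟨min_le_of_left_le hs.le, h⟩) id

lemma duhamelTail_eq_sub (hf : LocallyIntegrable f) (hA : Norm1Bound δ f A) (hc : 0 ≤ c)
    (hcδ : 0 < c + δ) :
    duhamelTail c f = fun t => exp (c * t) *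
      ((∫ s in Ioi 0, exp (-(c * s)) * f s) - ∫ s in (0 : ℝ)..t, exp (-(c * s)) * f s) := by
  ext t
  rw [duhamelTail, ← intervalIntegral.integral_Ioi_sub_Ioi'
    (integrableOn_Ioi_exp_mul hf hA hc hcδ 0) (integrableOn_Ioi_exp_mul hf hA hc hcδ t),
    sub_sub_cancel]

lemma continuous_duhamelTail (hf : LocallyIntegrable f) (hA : Norm1Bound δ f A) (hc : 0 ≤ c)
    (hcδ : 0 < c + δ) :
    Continuous (duhamelTail c f) := by
  rw [duhamelTail_eq_sub hf hA hc hcδ]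
  exact (by fun_prop : Continuous fun t => exp (c * t)).mul (continuous_const.sub
    (intervalIntegral.continuous_primitive (fun _ _ =>
      ((hf.exp_mul c).integrableOn_isCompact isCompact_uIcc).intervalIntegrable) 0))

lemma NormInfBound.duhamelTail (hf : LocallyIntegrable f) (hA : Norm1Bound δ f A) (hc : 0 ≤ c)
    (hcδ : 0 < c + δ) :
    NormInfBound δ (duhamelTail c f) (A / (1 - exp (-(c + δ)))) := by
  intro t ht
  have hq := hA.exp_mul (hf.locallyIntegrableOn _) hc
  calc exp (δ * t) * |_root_.duhamelTail c f t|
      ≤ exp (δ * t) * (exp (c * t) * ∫ s in Ioi t, |exp (-(c * s)) * f s|) := by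
        rw [_root_.duhamelTail, abs_mul, abs_of_pos (exp_pos _)]
        gcongr
        exact abs_integral_le_integral_abs
    _ ≤ exp (δ * t) * (exp (c * t) * (A * exp (-((c + δ) * t)) / (1 - exp (-(c + δ))))) := by
        gcongr
        exact hq.integral_Ioi_abs_le hcδ ((hf.exp_mul c).locallyIntegrableOn _) ht
    _ = A / (1 - exp (-(c + δ))) := by
        rw [show exp (δ * t) * (exp (c * t) * (A * exp (-((c + δ) * t)) / (1 - exp (-(c + δ)))))
            = A / (1 - exp (-(c + δ))) * (exp (δ * t + c * t + -((c + δ) * t))) by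
              rw [exp_add, exp_add]; ring,
          show δ * t + c * t + -((c + δ) * t) = 0 by ring, exp_zero, mul_one]

lemma duhamelTail_sub_duhamelTail_zero (hf : LocallyIntegrable f) (hA : Norm1Bound δ f A)
    (hc : 0 ≤ c) (hcδ : 0 < c + δ) (t : ℝ) :
    duhamelTail c f t - duhamelTail c f 0 = ∫ s in (0 : ℝ)..t, (c * duhamelTail c f s - f s) := by
  set q := fun s => exp (-(c * s)) * f s
  set I := ∫ s in Ioi 0, q s
  have hu := duhamelTail_eq_sub hf hA hc hcδ
  have hqi : IntervalIntegrable q volume 0 t :=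
    ((hf.exp_mul c).integrableOn_isCompact isCompact_uIcc).intervalIntegrable
  have hac : AbsolutelyContinuousOnInterval (duhamelTail c f) 0 t := by
    rw [hu]
    exact ((by fun_prop : ContDiff ℝ 1 fun t => exp (c * t)).contDiffOn
      |>.absolutelyContinuousOnInterval).fun_mul
      ((contDiffOn_const (c := I)).absolutelyContinuousOnInterval.sub
        (hqi.absolutelyContinuousOnInterval_intervalIntegral (by simp)))
  have hderiv :
      ∀ᵐ s, s ∈ uIoc 0 t → deriv (duhamelTail c f) s = c * duhamelTail c f s - f s := by
    filter_upwards [LocallyIntegrable.ae_hasDerivAt_integral (hf.exp_mul c)] with s hs _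
    have hE : HasDerivAt (fun t => exp (c * t)) (exp (c * s) * c) s := by
      simpa using ((hasDerivAt_id s).const_mul c).exp
    have h : exp (c * s) * exp (-(c * s)) = 1 := by rw [← exp_add]; simp
    rw [hu, (hE.fun_mul ((hs 0).const_sub I)).deriv]
    linear_combination -(f s) * h
  rw [← hac.integral_deriv_eq_sub]
  exact intervalIntegral.integral_congr_ae hderiv

end DuhamelTail

theorem norm1Bound_of_ae_eq {δ γ μ A B₀ B₁ : ℝ} {g Ψ h : ℝ → ℝ} (hδ : 0 ≤ δ)
    (hΨ : ContDiff ℝ 1 Ψ) (hB₀ : NormInfBound δ Ψ B₀) (hB₁ : NormInfBound δ (deriv Ψ) B₁)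
    (hg : LocallyIntegrableOn g (Ici 0)) (hgA : Norm1Bound δ g A)
    (hh : ∀ᵐ t ∂volume.restrict (Ici 0), -h t + γ * deriv Ψ t + μ ^ 2 * Ψ t = g t) :
    Norm1Bound δ h (|γ| * B₁ + μ ^ 2 * B₀ + A) := by
  set F := fun t => γ * deriv Ψ t + μ ^ 2 * Ψ t
  have hFc : Continuous F := by
    have := hΨ.continuous_deriv le_rfl
    have := hΨ.continuous
    fun_prop
  have hF : NormInfBound δ F (|γ| * B₁ + μ ^ 2 * B₀) := by
    have := (hB₁.const_mul γ).add (hB₀.const_mul (μ ^ 2))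
    rwa [abs_of_nonneg (sq_nonneg μ)] at this
  refine ((hF.norm1Bound hδ hFc).sub hgA (hFc.locallyIntegrable.locallyIntegrableOn _)
    hg).congr_ae ?_
  filter_upwards [hh] with t ht
  simp only [Pi.sub_apply, F]
  linarith

lemma deriv_duhamel_eq_add_integral {a b : ℝ} {u G : ℝ → ℝ} (hu : Continuous u)
    (hG : LocallyIntegrable G) (huG : ∀ t, u t - u 0 = ∫ s in (0 : ℝ)..t, (a * u s - G s))
    (t : ℝ) :
    deriv (duhamel b u) t = deriv (duhamel b u) 0 +
      ∫ s in (0 : ℝ)..t, ((a + b) * deriv (duhamel b u) s - a * b * duhamel b u s - G s) := by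
  set Ψ := duhamel b u
  have hΨ' : deriv Ψ = fun s => b * Ψ s + u s := funext fun s => (hasDerivAt_duhamel hu s).deriv
  have hΨc : Continuous Ψ := (contDiff_duhamel hu).continuous
  have hFTC : Ψ t = ∫ s in (0 : ℝ)..t, (b * Ψ s + u s) := by
    rw [intervalIntegral.integral_eq_sub_of_hasDerivAt (fun s _ => hasDerivAt_duhamel hu s)
      ((by fun_prop : Continuous fun s => b * Ψ s + u s).intervalIntegrable _ _)]
    simp [Ψ]
  have hsplit : ∫ s in (0 : ℝ)..t, ((a + b) * (b * Ψ s + u s) - a * b * Ψ s - G s)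
      = b * (∫ s in (0 : ℝ)..t, (b * Ψ s + u s)) + ∫ s in (0 : ℝ)..t, (a * u s - G s) := by
    rw [← intervalIntegral.integral_const_mul, ← intervalIntegral.integral_add
      ((by fun_prop : Continuous fun s => b * (b * Ψ s + u s)).intervalIntegrable _ _)
      (((by fun_prop : Continuous fun s => a * u s).intervalIntegrable _ _).sub
        ((hG.integrableOn_isCompact isCompact_uIcc).intervalIntegrable))]
    congr 1 with s
    ring
  rw [hΨ', hsplit, ← hFTC, ← huG]
  simp only [duhamel_zero, mul_zero, zero_add, Ψ]
  ring

theorem exists_W2Sol_of_factorization {δ γ μ a b : ℝ} (hδ : 0 ≤ δ) (ha : 0 < a)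
    (hbδ : b + δ < 0) (hab : a + b = γ) (hμ : a * b = -μ ^ 2) :
    ∃ K₀ K₁ : ℝ, 0 ≤ K₀ ∧ 0 ≤ K₁ ∧ ∀ G : ℝ → ℝ, LocallyIntegrable G → (∃ A, Norm1Bound δ G A) →
      ∃ Ψ h, W2Sol δ γ μ G Ψ h ∧
        ∀ A, Norm1Bound δ G A → NormInfBound δ Ψ (K₀ * A) ∧ NormInfBound δ (deriv Ψ) (K₁ * A) := by
  set Cu := (1 - exp (-(a + δ)))⁻¹
  have hCu : 0 ≤ Cu := inv_nonneg.2 (sub_nonneg.2 (exp_le_one_iff.2 (by linarith)))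
  have hκ : 0 < -(b + δ) := by linarith
  refine ⟨Cu / -(b + δ), |b| * (Cu / -(b + δ)) + Cu, by positivity, by positivity,
    fun G hG ⟨A₀, hA₀⟩ => ?_⟩
  have haδ : 0 < a + δ := by linarith
  set u := duhamelTail a G
  set Ψ := duhamel b u
  have hu : Continuous u := continuous_duhamelTail hG hA₀ ha.le haδ
  have hΨ' : deriv Ψ = fun s => b * Ψ s + u s := funext fun s => (hasDerivAt_duhamel hu s).deriv
  have hbounds : ∀ A, Norm1Bound δ G A →
      NormInfBound δ Ψ (Cu / -(b + δ) * A) ∧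
        NormInfBound δ (deriv Ψ) ((|b| * (Cu / -(b + δ)) + Cu) * A) := by
    intro A hA
    have huA : NormInfBound δ u (Cu * A) := by
      rw [mul_comm, ← div_eq_mul_inv]
      exact NormInfBound.duhamelTail hG hA ha.le haδ
    have hΨA : NormInfBound δ Ψ (Cu / -(b + δ) * A) := by
      rw [div_mul_eq_mul_div]
      exact huA.duhamel hu hbδ
    refine ⟨hΨA, ?_⟩
    rw [hΨ', add_mul, mul_assoc]
    exact (hΨA.const_mul b).add huA
  set h := fun s => γ * deriv Ψ s + μ ^ 2 * Ψ s - G s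
  have hΨC : ContDiff ℝ 1 Ψ := contDiff_duhamel hu
  have hODE : ∀ᵐ t ∂volume.restrict (Ici 0), -h t + γ * deriv Ψ t + μ ^ 2 * Ψ t = G t :=
    Eventually.of_forall fun t => by simp only [h]; ring
  obtain ⟨hΨA₀, hΨ'A₀⟩ := hbounds A₀ hA₀
  refine ⟨Ψ, h, ⟨hΨC, duhamel_zero, ⟨_, fun t ht => hΨA₀.exp_mul_abs_add_abs_le hΨ'A₀ ht⟩,
    (((hΨC.continuous_deriv le_rfl).const_mul γ |>.add (hΨC.continuous.const_mul _)
      |>.locallyIntegrable).sub hG).locallyIntegrableOn _, fun t _ => ?_,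
    ⟨_, norm1Bound_of_ae_eq hδ hΨC hΨA₀ hΨ'A₀ (hG.locallyIntegrableOn _) hA₀ hODE⟩, hODE⟩,
    hbounds⟩
  rw [deriv_duhamel_eq_add_integral hu hG
    (duhamelTail_sub_duhamelTail_zero hG hA₀ ha.le haδ) t, hab, hμ]
  refine congrArg _ (intervalIntegral.integral_congr fun s _ => ?_)
  simp only [h]
  ring

lemma eq_mul_exp_of_eq_add_integral {c : ℝ} {w : ℝ → ℝ} (hw : Continuous w)
    (h : ∀ t, 0 ≤ t → w t = w 0 + ∫ s in (0 : ℝ)..t, c * w s) {t : ℝ} (ht : 0 ≤ t) :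
    w t = w 0 * exp (c * t) := by
  set F := fun x => w 0 + ∫ s in (0 : ℝ)..x, c * w s
  have hF : ∀ x, HasDerivAt F (c * w x) x := fun x =>
    ((continuous_const.mul hw).integral_hasStrictDerivAt 0 x).hasDerivAt.const_add _
  have hFw : ∀ x, 0 ≤ x → F x = w x := fun x hx => (h x hx).symm
  have hE : ∀ x, HasDerivAt (fun x => exp (-(c * x))) (exp (-(c * x)) * -c) x := fun x => by
    simpa using ((hasDerivAt_id x).const_mul c).neg.exp
  have hconst := constant_of_has_deriv_right_zero (a := 0) (b := t)
    (f := fun x => exp (-(c * x)) * F x)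
    (continuous_iff_continuousAt.2 fun x => ((hE x).fun_mul (hF x)).continuousAt).continuousOn
    (fun x hx => ((hE x).fun_mul (hF x)).hasDerivWithinAt.congr_deriv (by
      rw [hFw x hx.1]
      ring)) t (right_mem_Icc.2 ht)
  rw [hFw t ht] at hconst
  have hwt : exp (-(c * t)) * w t = w 0 := by simpa [F] using hconst
  rw [← hwt, mul_right_comm, ← exp_add, neg_add_cancel, exp_zero, one_mul]

lemma eq_zero_of_abs_mul_exp_le {x a M : ℝ} (ha : 0 < a)
    (h : ∀ t, 0 ≤ t → |x * exp (a * t)| ≤ M) : x = 0 := by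
  by_contra hx
  have hlim : Tendsto (fun t => |x| * exp (a * t)) atTop atTop :=
    (tendsto_exp_atTop.comp (tendsto_id.const_mul_atTop ha)).const_mul_atTop (abs_pos.2 hx)
  obtain ⟨t, ht0, htM⟩ := ((eventually_ge_atTop 0).and (hlim.eventually_gt_atTop M)).exists
  have := h t ht0
  rw [abs_mul, abs_of_pos (exp_pos _)] at this
  exact absurd this (not_le.2 htM)

theorem eqOn_zero_of_bounded_of_deriv_eq {γ μ a b M : ℝ} {Φ : ℝ → ℝ} (ha : 0 < a)
    (hab : a + b = γ) (hμ : a * b = -μ ^ 2) (hΦ : ContDiff ℝ 1 Φ) (hΦ0 : Φ 0 = 0)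
    (hM : ∀ t, 0 ≤ t → |Φ t| + |deriv Φ t| ≤ M)
    (hode : ∀ t, 0 ≤ t →
      deriv Φ t = deriv Φ 0 + ∫ s in (0 : ℝ)..t, (γ * deriv Φ s + μ ^ 2 * Φ s)) :
    EqOn Φ 0 (Ici 0) := by
  have hΦc := hΦ.continuous
  have hΦ'c := hΦ.continuous_deriv le_rfl
  have hFTC : ∀ t, Φ t = ∫ s in (0 : ℝ)..t, deriv Φ s := fun t => by
    rw [intervalIntegral.integral_eq_sub_of_hasDerivAt
      (fun s _ => (hΦ.differentiable one_ne_zero s).hasDerivAt) (hΦ'c.intervalIntegrable _ _),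
      hΦ0, sub_zero]
  -- `z = Φ' - bΦ` solves `z' = a z` and is bounded, so it vanishes; then `Φ' = bΦ`, `Φ(0) = 0`
  set z := fun t => deriv Φ t - b * Φ t
  have hz : ∀ t, 0 ≤ t → z t = z 0 + ∫ s in (0 : ℝ)..t, a * z s := fun t ht => by
    have hsplit : ∫ s in (0 : ℝ)..t, a * z s
        = (∫ s in (0 : ℝ)..t, (γ * deriv Φ s + μ ^ 2 * Φ s))
          - b * ∫ s in (0 : ℝ)..t, deriv Φ s := by
      rw [← intervalIntegral.integral_const_mul, ← intervalIntegral.integral_sub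
        ((by fun_prop : Continuous fun s => γ * deriv Φ s + μ ^ 2 * Φ s).intervalIntegrable _ _)
        ((by fun_prop : Continuous fun s => b * deriv Φ s).intervalIntegrable _ _)]
      refine intervalIntegral.integral_congr fun s _ => ?_
      simp only [z, ← hab]
      linear_combination (-Φ s) * hμ
    simp only [z]
    rw [hsplit, ← hFTC, hode t ht, hΦ0]
    ring
  have hz0 : z 0 = 0 := by
    refine eq_zero_of_abs_mul_exp_le ha (M := M + |b| * M) fun t ht => ?_
    rw [← eq_mul_exp_of_eq_add_integral (by fun_prop) hz ht]
    calc |deriv Φ t - b * Φ t| ≤ |deriv Φ t| + |b| * |Φ t| := by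
          rw [← abs_mul]; exact abs_sub _ _
      _ ≤ M + |b| * M := by
          have := hM t ht
          gcongr <;> linarith [abs_nonneg (Φ t), abs_nonneg (deriv Φ t)]
  have hΦb : ∀ t, 0 ≤ t → Φ t = Φ 0 + ∫ s in (0 : ℝ)..t, b * Φ s := fun t ht => by
    rw [hΦ0, zero_add, hFTC t]
    refine intervalIntegral.integral_congr fun s hs => ?_
    have hs0 : 0 ≤ s := by rw [uIcc_of_le ht] at hs; exact hs.1
    have := eq_mul_exp_of_eq_add_integral (by fun_prop) hz hs0
    rw [hz0, zero_mul] at this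
    simp only [z] at this
    linarith
  intro t ht
  rw [eq_mul_exp_of_eq_add_integral hΦc hΦb ht, hΦ0, zero_mul, Pi.zero_apply]

theorem W2Sol.eqOn {δ γ μ a b : ℝ} {g Ψ₁ h₁ Ψ₂ h₂ : ℝ → ℝ} (hδ : 0 ≤ δ) (ha : 0 < a)
    (hab : a + b = γ) (hμ : a * b = -μ ^ 2) (H₁ : W2Sol δ γ μ g Ψ₁ h₁)
    (H₂ : W2Sol δ γ μ g Ψ₂ h₂) : EqOn Ψ₁ Ψ₂ (Ici 0) := by
  obtain ⟨hC₁, h0₁, ⟨B₁, hB₁⟩, hloc₁, hint₁, -, hode₁⟩ := H₁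
  obtain ⟨hC₂, h0₂, ⟨B₂, hB₂⟩, hloc₂, hint₂, -, hode₂⟩ := H₂
  have hderiv : deriv (fun t => Ψ₁ t - Ψ₂ t) = fun t => deriv Ψ₁ t - deriv Ψ₂ t :=
    funext fun t => deriv_sub (hC₁.differentiable one_ne_zero t) (hC₂.differentiable one_ne_zero t)
  have hbdd : ∀ {Ψ : ℝ → ℝ} {B : ℝ}, (∀ t, 0 ≤ t → exp (δ * t) * (|Ψ t| + |deriv Ψ t|) ≤ B) →
      ∀ t, 0 ≤ t → |Ψ t| + |deriv Ψ t| ≤ B := fun hB t ht =>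
    (le_mul_of_one_le_left (by positivity) (one_le_exp (by positivity))).trans (hB t ht)
  have hdiff : ∀ᵐ s ∂volume.restrict (Ici 0),
      h₁ s - h₂ s = γ * deriv (fun t => Ψ₁ t - Ψ₂ t) s + μ ^ 2 * (Ψ₁ s - Ψ₂ s) := by
    filter_upwards [hode₁, hode₂] with s e₁ e₂
    rw [hderiv]
    linarith
  intro t ht
  refine sub_eq_zero.1 (eqOn_zero_of_bounded_of_deriv_eq ha hab hμ (hC₁.sub hC₂)
    (by simp [h0₁, h0₂]) (M := B₁ + B₂) (fun t ht => ?_) (fun t ht => ?_) ht)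
  · rw [hderiv]
    linarith [abs_sub (Ψ₁ t) (Ψ₂ t), abs_sub (deriv Ψ₁ t) (deriv Ψ₂ t), hbdd hB₁ t ht,
      hbdd hB₂ t ht]
  · have hsub : uIoc 0 t ⊆ Ici 0 := by
      rw [uIoc_of_le ht]; exact fun s hs => hs.1.le
    rw [← intervalIntegral.integral_congr_ae_restrict
        (ae_restrict_of_ae_restrict_of_subset hsub hdiff),
      intervalIntegral.integral_sub (hloc₁.intervalIntegrable_of_nonneg le_rfl ht)
        (hloc₂.intervalIntegrable_of_nonneg le_rfl ht), hderiv]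
    linarith [hint₁ t ht, hint₂ t ht]

lemma deriv_eqOn_Ici {f g : ℝ → ℝ} {a : ℝ} (hf : Differentiable ℝ f) (hg : Differentiable ℝ g)
    (hfg : EqOn f g (Ici a)) : EqOn (deriv f) (deriv g) (Ici a) := fun t ht => by
  rw [← (hf t).derivWithin (uniqueDiffOn_Ici a t ht),
    ← (hg t).derivWithin (uniqueDiffOn_Ici a t ht),
    derivWithin_congr hfg (hfg ht)]

lemma W2Sol.congr {δ γ μ : ℝ} {g g' Ψ h : ℝ → ℝ} (H : W2Sol δ γ μ g Ψ h)
    (hgg' : EqOn g g' (Ici 0)) : W2Sol δ γ μ g' Ψ h := by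
  obtain ⟨hC, h0, hB, hloc, hint, hh, hode⟩ := H
  refine ⟨hC, h0, hB, hloc, hint, hh, ?_⟩
  filter_upwards [hode, ae_restrict_mem measurableSet_Ici] with t e ht
  rw [← hgg' ht]
  exact e

lemma exists_factorization {δ γ μ : ℝ} (hδ : 0 ≤ δ) (hγ : 0 ≤ γ)
    (hlt : δ < √(γ ^ 2 / 4 + μ ^ 2) - γ / 2) :
    ∃ a b : ℝ, 0 < a ∧ b + δ < 0 ∧ a + b = γ ∧ a * b = -μ ^ 2 := by
  have hS := sq_sqrt (by positivity : 0 ≤ γ ^ 2 / 4 + μ ^ 2)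
  refine ⟨γ / 2 + √(γ ^ 2 / 4 + μ ^ 2), γ / 2 - √(γ ^ 2 / 4 + μ ^ 2), by linarith, by linarith,
    by ring, ?_⟩
  linear_combination -hS

theorem stmt12_general (δ γ μ : ℝ) (hδ0 : 0 ≤ δ) (hγ : 0 ≤ γ)
    (hlt : δ < Real.sqrt (γ ^ 2 / 4 + μ ^ 2) - γ / 2) :
    ∃ C : ℝ, 0 < C ∧
      ∀ g : ℝ → ℝ, MeasureTheory.LocallyIntegrableOn g (Set.Ici 0) →
        (∃ A : ℝ, Norm1Bound δ g A) →
        (∃ Ψ h : ℝ → ℝ, W2Sol δ γ μ g Ψ h ∧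
          ∀ Ψ' h' : ℝ → ℝ, W2Sol δ γ μ g Ψ' h' → Set.EqOn Ψ Ψ' (Set.Ici 0)) ∧
        (∀ Ψ h : ℝ → ℝ, ∀ A : ℝ, W2Sol δ γ μ g Ψ h → Norm1Bound δ g A →
          (∀ t : ℝ, 0 ≤ t → Real.exp (δ * t) * (|Ψ t| + |deriv Ψ t|) ≤ C * A) ∧
          Norm1Bound δ h (C * A)) := by
  obtain ⟨a, b, ha, hbδ, hab, hμ⟩ := exists_factorization hδ0 hγ hlt
  obtain ⟨K₀, K₁, hK₀, hK₁, hexists⟩ := exists_W2Sol_of_factorization hδ0 ha hbδ hab hμ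
  refine ⟨K₀ + K₁ + (|γ| * K₁ + μ ^ 2 * K₀ + 1), by positivity, fun g hg hgA => ?_⟩
  have hGg : EqOn ((Ici 0).indicator g) g (Ici 0) := fun t ht => indicator_of_mem ht g
  obtain ⟨Ψ₀, h₀, hsol₀, hbounds⟩ := hexists _ (hg.locallyIntegrable_indicator isClosed_Ici)
    (hgA.imp fun A hA => hA.congr_ae (ae_restrict_of_forall_mem measurableSet_Ici hGg.symm))
  have hsol := hsol₀.congr hGg
  have huniq : ∀ Ψ h, W2Sol δ γ μ g Ψ h → EqOn Ψ₀ Ψ (Ici 0) :=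
    fun Ψ h H => hsol.eqOn hδ0 ha hab hμ H
  refine ⟨⟨Ψ₀, h₀, hsol, huniq⟩, fun Ψ h A H hA => ?_⟩
  obtain ⟨hB₀, hB₁⟩ :=
    hbounds A (hA.congr_ae (ae_restrict_of_forall_mem measurableSet_Ici hGg.symm))
  replace hB₀ := hB₀.congr (huniq Ψ h H)
  replace hB₁ := hB₁.congr (deriv_eqOn_Ici (hsol.1.differentiable one_ne_zero)
    (H.1.differentiable one_ne_zero) (huniq Ψ h H))
  have hrest : 0 ≤ (|γ| * K₁ + μ ^ 2 * K₀ + 1) * A := mul_nonneg (by positivity) hA.nonneg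
  have hK : 0 ≤ (K₀ + K₁) * A := mul_nonneg (by positivity) hA.nonneg
  obtain ⟨hC, -, -, -, -, -, hode⟩ := H
  refine ⟨fun t ht => (hB₀.exp_mul_abs_add_abs_le hB₁ ht).trans (by linarith),
    (norm1Bound_of_ae_eq hδ0 hC hB₀ hB₁ hg hA hode).mono (by linarith)⟩

/-- the map `Ψ ↦ −Ψ'' + γΨ' + μ²Ψ` is an isomorphism
`W²_δ → L¹_δ` when `0 ≤ δ < √(γ²/4 + μ²) − γ/2`. -/
theorem stmt12 (δ γ μ : ℝ) (hδ0 : 0 ≤ δ) (hγ : 0 ≤ γ) (hμ : 0 ≤ μ)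
    (hlt : δ < Real.sqrt (γ ^ 2 / 4 + μ ^ 2) - γ / 2) :
    ∃ C : ℝ, 0 < C ∧
      ∀ g : ℝ → ℝ, MeasureTheory.LocallyIntegrableOn g (Set.Ici 0) →
        (∃ A : ℝ, Norm1Bound δ g A) →
        (∃ Ψ h : ℝ → ℝ, W2Sol δ γ μ g Ψ h ∧
          ∀ Ψ' h' : ℝ → ℝ, W2Sol δ γ μ g Ψ' h' → Set.EqOn Ψ Ψ' (Set.Ici 0)) ∧
        (∀ Ψ h : ℝ → ℝ, ∀ A : ℝ, W2Sol δ γ μ g Ψ h → Norm1Bound δ g A →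
          (∀ t : ℝ, 0 ≤ t → Real.exp (δ * t) * (|Ψ t| + |deriv Ψ t|) ≤ C * A) ∧
          Norm1Bound δ h (C * A)) :=
  stmt12_general δ γ μ hδ0 hγ hlt
end
end
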